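/- Fix κ, c, h ∈ ℂ with c ≠ 0, and let F_k, G_k : Ω_k → ℂ and the connected functions F^c_k be as follows: smooth symmetric families on Ω_k = {x ∈ ℝ^k : xᵢ pairwise distinct and nonzero} with G₀ = 1, G₁ = 0, satisfying the Ward identities F_{k+1}(x,y) = Σᵢ[(1/(y−xᵢ) − 1/y)∂F_k/∂xᵢ + 2/(y−xᵢ)²·F_k] + (h/y²)F_k + Σⱼ(c/2)(y−xⱼ)^{−4}F_{k−1}(x∖xⱼ), and the same for G without the h/y² term; F^c_k(x) = F_k(x) − Σ_{∅≠A⊆{1,…,k}} G_{|A|}(x_A)F^c_{k−|A|}(x_{Aᶜ}). Let 𝒟 denote the operator 𝒟 = (κ/2)(Σ_{i=1}^{k} ∂/∂xᵢ)² + Σ_{i=1}^{k} (2/xᵢ)·∂/∂xᵢ. Assume additionally: (i) the null-vector equations {𝒟 − Σ_{i=1}^{k} 4/xᵢ²}F_k(x) = c·Σ_{i=1}^{k} xᵢ^{−4}·F_{k−1}(x∖xᵢ) hold for all k ≥ 1; (ii) there is a smooth symmetric family H_j : Ω_j → ℂ (representing ⟨T(0)T(x₁)⋯T(x_j)⟩)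 such that 𝒟G_j(x) = −2[ H_j(x) − Σ_{ℓ=1}^{j} (c/2)·x_ℓ^{−4}·G_{j−1}(x∖x_ℓ) ] + (Σ_{ℓ=1}^{j} 4/x_ℓ²)·G_j(x) for all j ≥ 1; (iii) the connected versions of H, defined by H^c_j(x) = H_j(x) − Σ_{∅≠A⊆{1,…,j}} G_{|A|}(x_A)·H^c_{j−|A|}(x_{Aᶜ}) with H^c₀ = 0, satisfy H^c_j(x) = (c/2)·𝒯_j(x) for all j ≥ 1. Then for every k ≥ 1: {𝒟 − Σ_{i=1}^{k} 4/xᵢ²} F^c_k(x) = c · Σ_{∅ ≠ A ⊆ {1,…,k}} 𝒯_{|A|}(x_A) · F^c_{k−|A|}(x_{Aᶜ}). (This is the null-vector equation for connected correlators, coinciding with the equation satisfied by multi-slit probabilities of SLE_κ decorated by Brownian bubbles of intensity λ = −c.) -/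

import Mathlib

open Finset Complex

/-- Partial derivative `∂f/∂xᵢ` of a function of `k` real variables. -/
noncomputable def pderivC {k : ℕ} (i : Fin k) (f : (Fin k → ℝ) → ℂ) :
    (Fin k → ℝ) → ℂ :=
  fun x => deriv (fun t => f (Function.update x i t)) (x i)

/-- The differential operator `𝒟 = (κ/2)(Σᵢ ∂ᵢ)² + Σᵢ (2/xᵢ) ∂ᵢ`. -/
noncomputable def Dop (κ : ℂ) {k : ℕ} (f : (Fin k → ℝ) → ℂ) (x : Fin k → ℝ) : ℂ :=
  κ / 2 * ∑ i : Fin k, ∑ j : Fin k, pderivC i (pderivC j f) x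
    + ∑ i : Fin k, ((2 / x i : ℝ) : ℂ) * pderivC i f x

/-- The configuration space `Ω_k` of pairwise distinct nonzero real coordinates. -/
def OmegaSet (k : ℕ) : Set (Fin k → ℝ) :=
  {x | (∀ i, x i ≠ 0) ∧ Function.Injective x}

/-- The Brownian-bubble weight `𝒯_j(x₁,…,x_j) = Σ_{s ∈ S_j}
1/(x_{s(1)}² (x_{s(2)}-x_{s(1)})² ⋯ (x_{s(j)}-x_{s(j-1)})² x_{s(j)}²)`
(with the convention `TT 0 = 1`, unused below). -/
noncomputable def TT : (j : ℕ) → (Fin j → ℂ) → ℂ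
  | 0, _ => 1
  | m + 1, x =>
      ∑ s : Equiv.Perm (Fin (m + 1)),
        1 / ((x (s 0)) ^ 2 *
          (∏ i : Fin m, (x (s i.succ) - x (s i.castSucc)) ^ 2) *
          (x (s (Fin.last m))) ^ 2)

section Basic
variable {k : ℕ}

lemma isOpen_omega (k : ℕ) : IsOpen (OmegaSet k) := by
  have : OmegaSet k = (⋂ i, {x : Fin k → ℝ | x i ≠ 0}) ∩
      ⋂ (i) (j) (_ : i ≠ j), {x : Fin k → ℝ | x i ≠ x j} := by
    ext x
    simp only [OmegaSet, Set.mem_setOf_eq, Set.mem_inter_iff, Set.mem_iInter]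
    constructor
    · rintro ⟨h1, h2⟩
      exact ⟨h1, fun i j hij => fun hx => hij (h2 hx)⟩
    · rintro ⟨h1, h2⟩
      refine ⟨h1, fun i j hij => ?_⟩
      by_contra hne
      exact h2 i j hne hij
  rw [this]
  refine IsOpen.inter (isOpen_iInter_of_finite fun i => ?_)
    (isOpen_iInter_of_finite fun i => isOpen_iInter_of_finite fun j =>
      isOpen_iInter_of_finite fun _ => ?_)
  · exact isOpen_compl_iff.mpr (isClosed_eq (continuous_apply i) continuous_const)
  · exact isOpen_compl_iff.mpr (isClosed_eq (continuous_apply i) (continuous_apply j))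

lemma hasDerivAt_comp_update' {f : (Fin k → ℝ) → ℂ} {x : Fin k → ℝ} (i : Fin k)
    (hf : DifferentiableAt ℝ f x) :
    HasDerivAt (fun t => f (Function.update x i t))
      (fderiv ℝ f x (Pi.single i (1:ℝ))) (x i) := by
  have hf' : HasFDerivAt f (fderiv ℝ f x) (Function.update x i (x i)) := by
    rw [Function.update_eq_self i x]; exact hf.hasFDerivAt
  exact HasFDerivAt.comp_hasDerivAt (x i) hf' (hasDerivAt_update x i (x i))

lemma pderivC_eq_fderiv {f : (Fin k → ℝ) → ℂ} {x : Fin k → ℝ} (i : Fin k)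
    (hf : DifferentiableAt ℝ f x) :
    pderivC i f x = fderiv ℝ f x (Pi.single i (1:ℝ)) :=
  (hasDerivAt_comp_update' i hf).deriv

lemma hasDerivAt_comp_update {f : (Fin k → ℝ) → ℂ} {x : Fin k → ℝ} (i : Fin k)
    (hf : DifferentiableAt ℝ f x) :
    HasDerivAt (fun t => f (Function.update x i t)) (pderivC i f x) (x i) := by
  rw [pderivC_eq_fderiv i hf]
  exact hasDerivAt_comp_update' i hf

lemma eventuallyEq_of_eqOn {f g : (Fin k → ℝ) → ℂ} {s : Set (Fin k → ℝ)}
    (hs : IsOpen s) (hfg : Set.EqOn f g s) {x : Fin k → ℝ} (hx : x ∈ s) :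
    f =ᶠ[nhds x] g :=
  Filter.eventuallyEq_of_mem (hs.mem_nhds hx) hfg

lemma pderivC_congr {f g : (Fin k → ℝ) → ℂ} {x : Fin k → ℝ} (i : Fin k)
    (hfg : f =ᶠ[nhds x] g) : pderivC i f x = pderivC i g x := by
  have hcont : ContinuousAt (fun t => Function.update x i t) (x i) :=
    (hasDerivAt_update x i (x i)).continuousAt
  have : (fun t => f (Function.update x i t)) =ᶠ[nhds (x i)]
      (fun t => g (Function.update x i t)) := by
    have hx : Function.update x i (x i) = x := Function.update_eq_self i x
    have := hcont.preimage_mem_nhds (by rw [hx]; exact hfg)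
    filter_upwards [this] with t ht using ht
  exact this.deriv_eq

lemma pderivC_congrOn {f g : (Fin k → ℝ) → ℂ} {s : Set (Fin k → ℝ)}
    (hs : IsOpen s) (hfg : Set.EqOn f g s) {x : Fin k → ℝ} (hx : x ∈ s) (i : Fin k) :
    pderivC i f x = pderivC i g x :=
  pderivC_congr i (eventuallyEq_of_eqOn hs hfg hx)

end Basic

section Arith
variable {k : ℕ} {f g : (Fin k → ℝ) → ℂ} {x : Fin k → ℝ}

lemma pderivC_add (i : Fin k) (hf : DifferentiableAt ℝ f x)
    (hg : DifferentiableAt ℝ g x) :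
    pderivC i (fun y => f y + g y) x = pderivC i f x + pderivC i g x :=
  ((hasDerivAt_comp_update i hf).add (hasDerivAt_comp_update i hg)).deriv

lemma pderivC_sub (i : Fin k) (hf : DifferentiableAt ℝ f x)
    (hg : DifferentiableAt ℝ g x) :
    pderivC i (fun y => f y - g y) x = pderivC i f x - pderivC i g x :=
  ((hasDerivAt_comp_update i hf).sub (hasDerivAt_comp_update i hg)).deriv

lemma pderivC_mul (i : Fin k) (hf : DifferentiableAt ℝ f x)
    (hg : DifferentiableAt ℝ g x) :
    pderivC i (fun y => f y * g y) x = pderivC i f x * g x + f x * pderivC i g x := by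
  have := ((hasDerivAt_comp_update i hf).fun_mul (hasDerivAt_comp_update i hg)).deriv
  simp only [Function.update_eq_self] at this
  exact this

lemma pderivC_const (i : Fin k) (a : ℂ) : pderivC i (fun _ => a) x = 0 := by
  simp [pderivC]

lemma pderivC_sum {ι : Type*} (s : Finset ι) (i : Fin k)
    (Φ : ι → (Fin k → ℝ) → ℂ) (hΦ : ∀ a ∈ s, DifferentiableAt ℝ (Φ a) x) :
    pderivC i (fun y => ∑ a ∈ s, Φ a y) x = ∑ a ∈ s, pderivC i (Φ a) x :=
  by
  have h : HasDerivAt (fun t => ∑ a ∈ s, Φ a (Function.update x i t))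
      (∑ a ∈ s, pderivC i (Φ a) x) (x i) :=
    HasDerivAt.fun_sum fun a ha => hasDerivAt_comp_update i (hΦ a ha)
  exact h.deriv

lemma diffAt_of_contDiffOn (hf : ContDiffOn ℝ (⊤ : ℕ∞) f (OmegaSet k))
    (hx : x ∈ OmegaSet k) : DifferentiableAt ℝ f x :=
  (hf.contDiffAt ((isOpen_omega k).mem_nhds hx)).differentiableAt (by simp)

lemma contDiffOn_pderivC (hf : ContDiffOn ℝ (⊤ : ℕ∞) f (OmegaSet k)) (i : Fin k) :
    ContDiffOn ℝ (⊤ : ℕ∞) (pderivC i f) (OmegaSet k) := by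
  have h1 : ContDiffOn ℝ (⊤ : ℕ∞) (fderiv ℝ f) (OmegaSet k) :=
    hf.fderiv_of_isOpen (isOpen_omega k) (by simp)
  have h2 : ContDiffOn ℝ (⊤ : ℕ∞) (fun y => (fderiv ℝ f y) (Pi.single i (1:ℝ)))
      (OmegaSet k) := h1.clm_apply contDiffOn_const
  refine h2.congr fun y hy => ?_
  exact pderivC_eq_fderiv i (diffAt_of_contDiffOn hf hy)

lemma contDiffOn_mul' {u v : (Fin k → ℝ) → ℂ}
    (hu : ContDiffOn ℝ (⊤ : ℕ∞) u (OmegaSet k)) (hv : ContDiffOn ℝ (⊤ : ℕ∞) v (OmegaSet k)) :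
    ContDiffOn ℝ (⊤ : ℕ∞) (fun y => u y * v y) (OmegaSet k) := hu.mul hv

end Arith

section Emb
variable {n : ℕ} {α : Type*}

/-- The order embedding of `Fin s.card` onto a subset `s ⊆ Fin n`. -/
def embF {n : ℕ} (s : Finset (Fin n)) : Fin s.card → Fin n := ⇑(s.orderEmbOfFin rfl)

lemma embF_mem (s : Finset (Fin n)) (p : Fin s.card) : embF s p ∈ s :=
  Finset.orderEmbOfFin_mem s rfl p

lemma embF_strictMono (s : Finset (Fin n)) : StrictMono (embF s) :=
  (s.orderEmbOfFin rfl).strictMono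

lemma embF_injective (s : Finset (Fin n)) : Function.Injective (embF s) :=
  (embF_strictMono s).injective

lemma embF_surj (s : Finset (Fin n)) {i : Fin n} (hi : i ∈ s) :
    ∃ p, embF s p = i := by
  have := Finset.range_orderEmbOfFin s (rfl : s.card = s.card)
  have : i ∈ Set.range (s.orderEmbOfFin rfl) := by rw [this]; exact_mod_cast hi
  exact this

/-- Transport a family along a cardinality proof. -/
lemma family_emb_cast {β : Type*} (W : (j : ℕ) → (Fin j → α) → β) (s : Finset (Fin n))
    {m : ℕ} (h : s.card = m) (x : Fin n → α) :
    W m (fun i => x (s.orderEmbOfFin h i)) = W s.card (fun i => x (embF s i)) := by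
  subst h; rfl

lemma comp_inj_mem_omega {m : ℕ} {x : Fin n → ℝ} (hx : x ∈ OmegaSet n)
    {e : Fin m → Fin n} (he : Function.Injective e) : (x ∘ e) ∈ OmegaSet m :=
  ⟨fun p => hx.1 (e p), fun p q hpq => he (hx.2 hpq)⟩

lemma comp_embF_mem_omega {x : Fin n → ℝ} (hx : x ∈ OmegaSet n) (s : Finset (Fin n)) :
    (x ∘ embF s) ∈ OmegaSet s.card :=
  comp_inj_mem_omega hx (embF_injective s)

/-- Restriction of a function on `Fin s.card` variables to a function of `n` variables. -/
def resF {n : ℕ} (s : Finset (Fin n)) (u : (Fin s.card → ℝ) → ℂ) : (Fin n → ℝ) → ℂ :=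
  fun x => u (x ∘ embF s)

lemma pderivC_res_not_mem (s : Finset (Fin n)) (u : (Fin s.card → ℝ) → ℂ)
    {i : Fin n} (hi : i ∉ s) :
    pderivC i (resF s u) = fun _ => 0 := by
  funext x
  have hnot : ∀ p : Fin s.card, embF s p ≠ i := fun p hne => hi (hne ▸ embF_mem s p)
  have heq : (fun t => resF s u (Function.update x i t)) = fun _ => u (x ∘ embF s) := by
    funext t
    unfold resF
    congr 1
    funext p
    exact Function.update_of_ne (hnot p) _ x
  simp [pderivC, heq]

lemma update_comp_embF (s : Finset (Fin n)) (x : Fin n → ℝ) (p : Fin s.card) (t : ℝ) :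
    (Function.update x (embF s p) t) ∘ embF s = Function.update (x ∘ embF s) p t := by
  funext q
  by_cases hq : q = p
  · subst hq; simp
  · have hne : embF s q ≠ embF s p := fun hh => hq (embF_injective s hh)
    simp [Function.comp, Function.update_of_ne hne, Function.update_of_ne hq]

lemma pderivC_res_mem (s : Finset (Fin n)) (u : (Fin s.card → ℝ) → ℂ) (p : Fin s.card) :
    pderivC (embF s p) (resF s u) = resF s (pderivC p u) := by
  funext x
  have heq : (fun t => resF s u (Function.update x (embF s p) t))
      = fun t => u (Function.update (x ∘ embF s) p t) := by
    funext t; unfold resF; rw [update_comp_embF]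
  show deriv _ (x (embF s p)) = deriv _ ((x ∘ embF s) p)
  rw [heq]; rfl

lemma sum_emb (s : Finset (Fin n)) (f : Fin n → ℂ) :
    ∑ i ∈ s, f i = ∑ p : Fin s.card, f (embF s p) := by
  rw [← Finset.sum_coe_sort s f, ← Equiv.sum_comp (s.orderIsoOfFin rfl).toEquiv
    (fun a : {y // y ∈ s} => f ↑a)]
  refine Finset.sum_congr rfl fun p _ => ?_
  simp [embF, Finset.coe_orderIsoOfFin_apply]

/-- Pushforward of a subset of `Fin s.card` to a subset of `Fin n`. -/
def pushS {n : ℕ} (s : Finset (Fin n)) (t : Finset (Fin s.card)) : Finset (Fin n) :=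
  t.map ⟨embF s, embF_injective s⟩

lemma card_pushS (s : Finset (Fin n)) (t : Finset (Fin s.card)) :
    (pushS s t).card = t.card := Finset.card_map _

lemma pushS_subset (s : Finset (Fin n)) (t : Finset (Fin s.card)) : pushS s t ⊆ s := by
  intro i hi
  obtain ⟨q, _, rfl⟩ := Finset.mem_map.mp hi
  exact embF_mem s q

lemma mem_pushS {s : Finset (Fin n)} {t : Finset (Fin s.card)} {q : Fin s.card} :
    embF s q ∈ pushS s t ↔ q ∈ t := by
  constructor
  · intro hq
    obtain ⟨q', hq', he⟩ := Finset.mem_map.mp hq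
    rwa [← embF_injective s he]
  · intro hq; exact Finset.mem_map.mpr ⟨q, hq, rfl⟩

lemma embF_pushS (s : Finset (Fin n)) (t : Finset (Fin s.card)) :
    ∀ p, (pushS s t).orderEmbOfFin (card_pushS s t) p = embF s (embF t p) := by
  have := Finset.orderEmbOfFin_unique ((card_pushS s t).trans rfl)
    (f := fun p => embF s (embF t p))
    (fun p => Finset.mem_map.mpr ⟨embF t p, embF_mem t p, rfl⟩)
    ((embF_strictMono s).comp (embF_strictMono t))
  intro p; rw [← this]

lemma pushS_compl (s : Finset (Fin n)) (t : Finset (Fin s.card)) :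
    pushS s tᶜ = s \ pushS s t := by
  ext i
  simp only [Finset.mem_sdiff]
  constructor
  · intro hi
    obtain ⟨q, hq, rfl⟩ := Finset.mem_map.mp hi
    rw [Finset.mem_compl] at hq
    exact ⟨embF_mem s q, fun hmem => hq (mem_pushS.mp hmem)⟩
  · rintro ⟨his, hnot⟩
    obtain ⟨q, rfl⟩ := embF_surj s his
    exact Finset.mem_map.mpr ⟨q, Finset.mem_compl.mpr (fun hq => hnot (mem_pushS.mpr hq)), rfl⟩

lemma family_comp {β : Type*} (W : (j : ℕ) → (Fin j → α) → β) (s : Finset (Fin n))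
    (t : Finset (Fin s.card)) (x : Fin n → α) :
    W t.card (fun p => x (embF s (embF t p)))
      = W (pushS s t).card (fun p => x (embF (pushS s t) p)) := by
  have h1 : (fun p => x (embF s (embF t p)))
      = fun p => x ((pushS s t).orderEmbOfFin (card_pushS s t) p) := by
    funext p; rw [embF_pushS]
  rw [h1, family_emb_cast W (pushS s t) (card_pushS s t) x]

lemma succAbove_eq_emb {m : ℕ} (l : Fin (m + 1)) :
    ∀ p : Fin m, l.succAbove p
      = ({l}ᶜ : Finset (Fin (m + 1))).orderEmbOfFin
          (by simp [Finset.card_compl]) p := by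
  intro p
  rw [← Finset.orderEmbOfFin_unique (f := l.succAbove) _
    (fun q => Finset.mem_compl.mpr (by simp [Fin.succAbove_ne]))
    (Fin.strictMono_succAbove l)]

lemma family_succAbove {β : Type*} (W : (j : ℕ) → (Fin j → α) → β) {m : ℕ}
    (l : Fin (m + 1)) (x : Fin (m + 1) → α) :
    W m (fun p => x (l.succAbove p))
      = W ({l}ᶜ : Finset (Fin (m + 1))).card (fun p => x (embF {l}ᶜ p)) := by
  have h1 : (fun p : Fin m => x (l.succAbove p))
      = fun p => x (({l}ᶜ : Finset (Fin (m + 1))).orderEmbOfFin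
          (by simp [Finset.card_compl]) p) := by
    funext p; rw [succAbove_eq_emb]
  rw [h1]
  exact family_emb_cast W {l}ᶜ (by simp [Finset.card_compl]) x

end Emb

section Smooth
variable {n : ℕ}

lemma contDiffOn_resF (s : Finset (Fin n)) {u : (Fin s.card → ℝ) → ℂ}
    (hu : ContDiffOn ℝ (⊤ : ℕ∞) u (OmegaSet s.card)) :
    ContDiffOn ℝ (⊤ : ℕ∞) (resF s u) (OmegaSet n) := by
  have hL : ContDiff ℝ (⊤ : ℕ∞) (fun x : Fin n → ℝ => x ∘ embF s) := by
    exact contDiff_pi.mpr fun p => contDiff_apply ℝ ℝ (embF s p)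
  exact hu.comp (hL.contDiffOn) (fun y hy => comp_embF_mem_omega hy s)

lemma sum_univ_eq_sum_emb (s : Finset (Fin n)) (F : Fin n → ℂ)
    (h0 : ∀ i ∈ sᶜ, F i = 0) :
    ∑ i : Fin n, F i = ∑ p : Fin s.card, F (embF s p) := by
  rw [← Finset.sum_add_sum_compl s F, Finset.sum_eq_zero h0, add_zero, sum_emb]

end Smooth

section Leibniz
variable {n : ℕ}

lemma Dop_res_mul (κ : ℂ) (s : Finset (Fin n))
    (u : (Fin s.card → ℝ) → ℂ) (v : (Fin sᶜ.card → ℝ) → ℂ)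
    (hu : ContDiffOn ℝ (⊤ : ℕ∞) u (OmegaSet s.card))
    (hv : ContDiffOn ℝ (⊤ : ℕ∞) v (OmegaSet sᶜ.card))
    {x : Fin n → ℝ} (hx : x ∈ OmegaSet n) :
    Dop κ (fun y => resF s u y * resF sᶜ v y) x
      = Dop κ u (x ∘ embF s) * v (x ∘ embF sᶜ)
        + u (x ∘ embF s) * Dop κ v (x ∘ embF sᶜ)
        + κ * (∑ p, pderivC p u (x ∘ embF s)) * (∑ q, pderivC q v (x ∘ embF sᶜ)) := by
  have hOpen := isOpen_omega n
  set fu := resF s u with hfu_def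
  set fv := resF sᶜ v with hfv_def
  have hfu : ContDiffOn ℝ (⊤ : ℕ∞) fu (OmegaSet n) := contDiffOn_resF s hu
  have hfv : ContDiffOn ℝ (⊤ : ℕ∞) fv (OmegaSet n) := contDiffOn_resF sᶜ hv
  have hmul : ∀ j : Fin n, Set.EqOn (pderivC j (fun y => fu y * fv y))
      (fun y => pderivC j fu y * fv y + fu y * pderivC j fv y) (OmegaSet n) :=
    fun j y hy => pderivC_mul j (diffAt_of_contDiffOn hfu hy) (diffAt_of_contDiffOn hfv hy)
  have h2 : ∀ i j : Fin n, pderivC i (pderivC j (fun y => fu y * fv y)) x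
      = pderivC i (pderivC j fu) x * fv x + pderivC j fu x * pderivC i fv x
        + pderivC i fu x * pderivC j fv x + fu x * pderivC i (pderivC j fv) x := by
    intro i j
    rw [pderivC_congrOn hOpen (hmul j) hx i]
    rw [pderivC_add i
      (diffAt_of_contDiffOn ((contDiffOn_pderivC hfu j).mul hfv) hx)
      (diffAt_of_contDiffOn (hfu.mul (contDiffOn_pderivC hfv j)) hx)]
    rw [pderivC_mul i (diffAt_of_contDiffOn (contDiffOn_pderivC hfu j) hx)
      (diffAt_of_contDiffOn hfv hx)]
    rw [pderivC_mul i (diffAt_of_contDiffOn hfu hx)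
      (diffAt_of_contDiffOn (contDiffOn_pderivC hfv j) hx)]
    ring
  have hpu : ∀ p : Fin s.card, pderivC (embF s p) fu x = pderivC p u (x ∘ embF s) := by
    intro p; rw [hfu_def, pderivC_res_mem s u p]; rfl
  have hpv : ∀ q : Fin sᶜ.card, pderivC (embF sᶜ q) fv x = pderivC q v (x ∘ embF sᶜ) := by
    intro q; rw [hfv_def, pderivC_res_mem sᶜ v q]; rfl
  have hpu0 : ∀ i ∈ sᶜ, pderivC i fu x = 0 := by
    intro i hi
    rw [hfu_def, pderivC_res_not_mem s u (Finset.mem_compl.mp hi)]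
  have hpv0 : ∀ i ∈ sᶜᶜ, pderivC i fv x = 0 := by
    intro i hi
    rw [hfv_def, pderivC_res_not_mem sᶜ v (Finset.mem_compl.mp hi)]
  -- first-order sums
  have hSA : ∑ i : Fin n, pderivC i fu x = ∑ p, pderivC p u (x ∘ embF s) := by
    rw [sum_univ_eq_sum_emb s _ hpu0]
    exact Finset.sum_congr rfl fun p _ => hpu p
  have hSB : ∑ i : Fin n, pderivC i fv x = ∑ q, pderivC q v (x ∘ embF sᶜ) := by
    rw [sum_univ_eq_sum_emb sᶜ _ hpv0]
    exact Finset.sum_congr rfl fun q _ => hpv q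
  -- second-order sums
  have hD2u : ∑ i : Fin n, ∑ j : Fin n, pderivC i (pderivC j fu) x
      = ∑ p, ∑ q, pderivC p (pderivC q u) (x ∘ embF s) := by
    conv_lhs => rw [Finset.sum_comm]
    rw [sum_univ_eq_sum_emb s (fun j => ∑ i : Fin n, pderivC i (pderivC j fu) x)
      (fun j hj => by
        show (∑ i : Fin n, pderivC i (pderivC j fu) x) = 0
        rw [hfu_def]
        refine Finset.sum_eq_zero fun i _ => ?_
        rw [pderivC_res_not_mem s u (Finset.mem_compl.mp hj)]
        exact pderivC_const i 0)]
    have inner : ∀ q : Fin s.card, (∑ i : Fin n, pderivC i (pderivC (embF s q) fu) x)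
        = ∑ p, pderivC p (pderivC q u) (x ∘ embF s) := by
      intro q
      rw [hfu_def, pderivC_res_mem s u q]
      rw [sum_univ_eq_sum_emb s (fun i => pderivC i (resF s (pderivC q u)) x)
        (fun i hi => by
          show pderivC i (resF s (pderivC q u)) x = 0
          rw [pderivC_res_not_mem s (pderivC q u) (Finset.mem_compl.mp hi)])]
      refine Finset.sum_congr rfl fun p _ => ?_
      rw [pderivC_res_mem s (pderivC q u) p]; rfl
    rw [Finset.sum_congr rfl (fun q (_ : q ∈ Finset.univ) => inner q)]
    exact Finset.sum_comm
  have hD2v : ∑ i : Fin n, ∑ j : Fin n, pderivC i (pderivC j fv) x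
      = ∑ p, ∑ q, pderivC p (pderivC q v) (x ∘ embF sᶜ) := by
    conv_lhs => rw [Finset.sum_comm]
    rw [sum_univ_eq_sum_emb sᶜ (fun j => ∑ i : Fin n, pderivC i (pderivC j fv) x)
      (fun j hj => by
        show (∑ i : Fin n, pderivC i (pderivC j fv) x) = 0
        rw [hfv_def]
        refine Finset.sum_eq_zero fun i _ => ?_
        rw [pderivC_res_not_mem sᶜ v (Finset.mem_compl.mp hj)]
        exact pderivC_const i 0)]
    have inner : ∀ q : Fin sᶜ.card, (∑ i : Fin n, pderivC i (pderivC (embF sᶜ q) fv) x)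
        = ∑ p, pderivC p (pderivC q v) (x ∘ embF sᶜ) := by
      intro q
      rw [hfv_def, pderivC_res_mem sᶜ v q]
      rw [sum_univ_eq_sum_emb sᶜ (fun i => pderivC i (resF sᶜ (pderivC q v)) x)
        (fun i hi => by
          show pderivC i (resF sᶜ (pderivC q v)) x = 0
          rw [pderivC_res_not_mem sᶜ (pderivC q v) (Finset.mem_compl.mp hi)])]
      refine Finset.sum_congr rfl fun p _ => ?_
      rw [pderivC_res_mem sᶜ (pderivC q v) p]; rfl
    rw [Finset.sum_congr rfl (fun q (_ : q ∈ Finset.univ) => inner q)]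
    exact Finset.sum_comm
  -- assemble the second-order part
  have e1 : ∑ i : Fin n, ∑ j : Fin n, pderivC i (pderivC j (fun y => fu y * fv y)) x
      = (∑ p, ∑ q, pderivC p (pderivC q u) (x ∘ embF s)) * fv x
        + (∑ p, pderivC p u (x ∘ embF s)) * (∑ q, pderivC q v (x ∘ embF sᶜ))
        + (∑ p, pderivC p u (x ∘ embF s)) * (∑ q, pderivC q v (x ∘ embF sᶜ))
        + fu x * (∑ p, ∑ q, pderivC p (pderivC q v) (x ∘ embF sᶜ)) := by
    simp only [h2]
    simp only [Finset.sum_add_distrib, ← Finset.sum_mul, ← Finset.mul_sum]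
    rw [hD2u, hD2v, hSA, hSB]
  -- assemble the first-order part
  have e2 : ∑ i : Fin n, ((2 / x i : ℝ) : ℂ) * pderivC i (fun y => fu y * fv y) x
      = (∑ p, ((2 / (x ∘ embF s) p : ℝ) : ℂ) * pderivC p u (x ∘ embF s)) * fv x
        + fu x * (∑ q, ((2 / (x ∘ embF sᶜ) q : ℝ) : ℂ) * pderivC q v (x ∘ embF sᶜ)) := by
    have h1 : ∀ i, ((2 / x i : ℝ) : ℂ) * pderivC i (fun y => fu y * fv y) x
        = ((2 / x i : ℝ) : ℂ) * pderivC i fu x * fv x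
          + fu x * (((2 / x i : ℝ) : ℂ) * pderivC i fv x) := by
      intro i; rw [hmul i hx]; ring
    rw [Finset.sum_congr rfl (fun i (_ : i ∈ Finset.univ) => h1 i),
      Finset.sum_add_distrib, ← Finset.sum_mul, ← Finset.mul_sum]
    congr 1
    · congr 1
      rw [sum_univ_eq_sum_emb s (fun i => ((2 / x i : ℝ) : ℂ) * pderivC i fu x)
        (fun i hi => by
          show ((2 / x i : ℝ) : ℂ) * pderivC i fu x = 0
          rw [hpu0 i hi, mul_zero])]
      exact Finset.sum_congr rfl fun p _ => by rw [hpu p]; rfl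
    · congr 1
      rw [sum_univ_eq_sum_emb sᶜ (fun i => ((2 / x i : ℝ) : ℂ) * pderivC i fv x)
        (fun i hi => by
          show ((2 / x i : ℝ) : ℂ) * pderivC i fv x = 0
          rw [hpv0 i hi, mul_zero])]
      exact Finset.sum_congr rfl fun q _ => by rw [hpv q]; rfl
  show κ / 2 * ∑ i : Fin n, ∑ j : Fin n, pderivC i (pderivC j (fun y => fu y * fv y)) x
      + ∑ i : Fin n, ((2 / x i : ℝ) : ℂ) * pderivC i (fun y => fu y * fv y) x = _
  rw [e1, e2]
  show _ = (κ / 2 * ∑ p, ∑ q, pderivC p (pderivC q u) (x ∘ embF s)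
      + ∑ p, ((2 / (x ∘ embF s) p : ℝ) : ℂ) * pderivC p u (x ∘ embF s)) * v (x ∘ embF sᶜ)
    + u (x ∘ embF s) * (κ / 2 * ∑ p, ∑ q, pderivC p (pderivC q v) (x ∘ embF sᶜ)
      + ∑ q, ((2 / (x ∘ embF sᶜ) q : ℝ) : ℂ) * pderivC q v (x ∘ embF sᶜ))
    + κ * (∑ p, pderivC p u (x ∘ embF s)) * (∑ q, pderivC q v (x ∘ embF sᶜ))
  have hfux : fu x = u (x ∘ embF s) := rfl
  have hfvx : fv x = v (x ∘ embF sᶜ) := rfl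
  rw [hfux, hfvx]
  ring

end Leibniz

section DopLin
variable {n : ℕ}

lemma Dop_congrOn (κ : ℂ) {f g : (Fin n → ℝ) → ℂ}
    (hfg : Set.EqOn f g (OmegaSet n)) {x : Fin n → ℝ} (hx : x ∈ OmegaSet n) :
    Dop κ f x = Dop κ g x := by
  have hOpen := isOpen_omega n
  have h1 : ∀ j, Set.EqOn (pderivC j f) (pderivC j g) (OmegaSet n) :=
    fun j y hy => pderivC_congrOn hOpen hfg hy j
  unfold Dop
  congr 1
  · congr 1
    refine Finset.sum_congr rfl fun i _ => Finset.sum_congr rfl fun j _ => ?_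
    exact pderivC_congrOn hOpen (h1 j) hx i
  · exact Finset.sum_congr rfl fun i _ => by rw [pderivC_congrOn hOpen hfg hx i]

lemma Dop_sub_sum (κ : ℂ) {ι : Type*} (s : Finset ι) {f : (Fin n → ℝ) → ℂ}
    (Φ : ι → (Fin n → ℝ) → ℂ) (hf : ContDiffOn ℝ (⊤ : ℕ∞) f (OmegaSet n))
    (hΦ : ∀ a ∈ s, ContDiffOn ℝ (⊤ : ℕ∞) (Φ a) (OmegaSet n))
    {x : Fin n → ℝ} (hx : x ∈ OmegaSet n) :
    Dop κ (fun y => f y - ∑ a ∈ s, Φ a y) x = Dop κ f x - ∑ a ∈ s, Dop κ (Φ a) x := by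
  have hOpen := isOpen_omega n
  have hsum : ContDiffOn ℝ (⊤ : ℕ∞) (fun y => ∑ a ∈ s, Φ a y) (OmegaSet n) :=
    ContDiffOn.sum fun a ha => hΦ a ha
  have k1on : ∀ j, Set.EqOn (pderivC j (fun y => f y - ∑ a ∈ s, Φ a y))
      (fun y => pderivC j f y - ∑ a ∈ s, pderivC j (Φ a) y) (OmegaSet n) := by
    intro j y hy
    show pderivC j _ y = _
    rw [pderivC_sub j (diffAt_of_contDiffOn hf hy) (diffAt_of_contDiffOn hsum hy),
      pderivC_sum s j Φ (fun a ha => diffAt_of_contDiffOn (hΦ a ha) hy)]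
  have k2 : ∀ i j, pderivC i (pderivC j (fun y => f y - ∑ a ∈ s, Φ a y)) x
      = pderivC i (pderivC j f) x - ∑ a ∈ s, pderivC i (pderivC j (Φ a)) x := by
    intro i j
    rw [pderivC_congrOn hOpen (k1on j) hx i]
    rw [pderivC_sub i (diffAt_of_contDiffOn (contDiffOn_pderivC hf j) hx)
      (diffAt_of_contDiffOn (ContDiffOn.sum fun a ha => contDiffOn_pderivC (hΦ a ha) j) hx)]
    rw [pderivC_sum s i (fun a => pderivC j (Φ a))
      (fun a ha => diffAt_of_contDiffOn (contDiffOn_pderivC (hΦ a ha) j) hx)]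
  have k1 : ∀ i, pderivC i (fun y => f y - ∑ a ∈ s, Φ a y) x
      = pderivC i f x - ∑ a ∈ s, pderivC i (Φ a) x := fun i => k1on i hx
  have swap2 : ∑ i : Fin n, ∑ j : Fin n, ∑ a ∈ s, pderivC i (pderivC j (Φ a)) x
      = ∑ a ∈ s, ∑ i : Fin n, ∑ j : Fin n, pderivC i (pderivC j (Φ a)) x := by
    rw [Finset.sum_congr rfl (fun i (_ : i ∈ Finset.univ) => Finset.sum_comm)]
    exact Finset.sum_comm
  have swap1 : ∑ i : Fin n, ∑ a ∈ s, ((2 / x i : ℝ) : ℂ) * pderivC i (Φ a) x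
      = ∑ a ∈ s, ∑ i : Fin n, ((2 / x i : ℝ) : ℂ) * pderivC i (Φ a) x :=
    Finset.sum_comm
  show κ / 2 * ∑ i : Fin n, ∑ j : Fin n,
        pderivC i (pderivC j (fun y => f y - ∑ a ∈ s, Φ a y)) x
      + ∑ i : Fin n, ((2 / x i : ℝ) : ℂ)
          * pderivC i (fun y => f y - ∑ a ∈ s, Φ a y) x = _
  simp only [k2, k1]
  have expand1 : ∑ i : Fin n, ∑ j : Fin n,
        (pderivC i (pderivC j f) x - ∑ a ∈ s, pderivC i (pderivC j (Φ a)) x)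
      = ∑ i : Fin n, ∑ j : Fin n, pderivC i (pderivC j f) x
        - ∑ a ∈ s, ∑ i : Fin n, ∑ j : Fin n, pderivC i (pderivC j (Φ a)) x := by
    simp only [Finset.sum_sub_distrib]
    rw [swap2]
  have expand2 : ∑ i : Fin n, ((2 / x i : ℝ) : ℂ)
        * (pderivC i f x - ∑ a ∈ s, pderivC i (Φ a) x)
      = ∑ i : Fin n, ((2 / x i : ℝ) : ℂ) * pderivC i f x
        - ∑ a ∈ s, ∑ i : Fin n, ((2 / x i : ℝ) : ℂ) * pderivC i (Φ a) x := by
    simp only [mul_sub, Finset.mul_sum, Finset.sum_sub_distrib]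
    rw [swap1]
  rw [expand1, expand2]
  show _ = (κ / 2 * ∑ i : Fin n, ∑ j : Fin n, pderivC i (pderivC j f) x
      + ∑ i : Fin n, ((2 / x i : ℝ) : ℂ) * pderivC i f x)
    - ∑ a ∈ s, (κ / 2 * ∑ i : Fin n, ∑ j : Fin n, pderivC i (pderivC j (Φ a)) x
      + ∑ i : Fin n, ((2 / x i : ℝ) : ℂ) * pderivC i (Φ a) x)
  rw [Finset.sum_add_distrib, ← Finset.mul_sum]
  ring

end DopLin

section TI
variable {m : ℕ}

lemma hasDerivAt_lineMap (x : Fin m → ℝ) (t0 : ℝ) :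
    HasDerivAt (fun t : ℝ => (fun i : Fin m => x i + t)) (fun _ : Fin m => (1:ℝ)) t0 := by
  have hline : (fun t : ℝ => (fun i : Fin m => x i + t))
      = fun t => x + t • (fun _ : Fin m => (1:ℝ)) := by
    funext t i; simp
  rw [hline]
  simpa using ((hasDerivAt_id t0).smul_const (fun _ : Fin m => (1:ℝ))).const_add x

lemma sum_pderiv_zero {g : (Fin m → ℝ) → ℂ}
    (hsm : ContDiffOn ℝ (⊤ : ℕ∞) g (OmegaSet m))
    (hti : ∀ (z : Fin m → ℝ) (t : ℝ), z ∈ OmegaSet m →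
      (fun i => z i + t) ∈ OmegaSet m → g (fun i => z i + t) = g z)
    {x : Fin m → ℝ} (hx : x ∈ OmegaSet m) :
    ∑ i : Fin m, pderivC i g x = 0 := by
  have hdiff := diffAt_of_contDiffOn hsm hx
  have hx0 : (fun i : Fin m => x i + (0:ℝ)) = x := by funext i; simp
  have hev : ∀ᶠ t in nhds (0:ℝ), (fun i : Fin m => x i + t) ∈ OmegaSet m := by
    have := (hasDerivAt_lineMap x 0).continuousAt.preimage_mem_nhds
      (by rw [hx0]; exact (isOpen_omega m).mem_nhds hx)
    filter_upwards [this] with t ht using ht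
  have hev2 : (fun t : ℝ => g (fun i => x i + t)) =ᶠ[nhds (0:ℝ)]
      (fun _ => g x) := by
    filter_upwards [hev] with t ht using hti x t hx ht
  have hder : deriv (fun t : ℝ => g (fun i => x i + t)) 0 = 0 := by
    rw [hev2.deriv_eq]; exact deriv_const _ _
  have hD : fderiv ℝ g x (fun _ : Fin m => (1:ℝ)) = 0 := by
    have h1 : HasFDerivAt g (fderiv ℝ g x) ((fun i : Fin m => x i + (0:ℝ))) := by
      rw [hx0]; exact hdiff.hasFDerivAt
    have h2 := (h1.comp_hasDerivAt 0 (hasDerivAt_lineMap x 0)).deriv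
    rw [← h2]; exact hder
  calc ∑ i : Fin m, pderivC i g x
      = ∑ i : Fin m, fderiv ℝ g x (Pi.single i (1:ℝ)) :=
        Finset.sum_congr rfl fun i _ => pderivC_eq_fderiv i hdiff
    _ = fderiv ℝ g x (∑ i : Fin m, Pi.single i (1:ℝ)) := (map_sum _ _ _).symm
    _ = fderiv ℝ g x (fun _ : Fin m => (1:ℝ)) := by
        congr 1
        exact Finset.univ_sum_single (fun _ : Fin m => (1:ℝ))
    _ = 0 := hD

lemma pderiv_TI {g : (Fin m → ℝ) → ℂ}
    (hti : ∀ (z : Fin m → ℝ) (t : ℝ), z ∈ OmegaSet m →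
      (fun i => z i + t) ∈ OmegaSet m → g (fun i => z i + t) = g z)
    {x : Fin m → ℝ} {t : ℝ} (hx : x ∈ OmegaSet m)
    (hxt : (fun i => x i + t) ∈ OmegaSet m) (p : Fin m) :
    pderivC p g (fun i => x i + t) = pderivC p g x := by
  have hOpen := isOpen_omega m
  -- the two update curves
  have key : ∀ s : ℝ, Function.update (fun i => x i + t) p s
      = fun i => (Function.update x p (s - t)) i + t := by
    intro s; funext i
    by_cases hip : i = p
    · subst hip; simp
    · simp [Function.update_of_ne hip]
  -- eventual equality of the 1d slices
  have hev : (fun s => g (Function.update (fun i => x i + t) p s)) =ᶠ[nhds (x p + t)]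
      (fun s => g (Function.update x p (s - t))) := by
    have hc1 : ContinuousAt (fun s : ℝ => Function.update x p (s - t)) (x p + t) := by
      have ha : ContinuousAt (Function.update x p) ((x p + t) - t) :=
        (hasDerivAt_update x p ((x p + t) - t)).continuousAt
      have hb : ContinuousAt (fun s : ℝ => s - t) (x p + t) :=
        (continuous_sub_right t).continuousAt
      exact ContinuousAt.comp (g := Function.update x p)
        (f := fun s : ℝ => s - t) (x := x p + t) ha hb
    have hmem : ∀ᶠ s in nhds (x p + t),
        Function.update x p (s - t) ∈ OmegaSet m ∧
        (fun i => (Function.update x p (s - t)) i + t) ∈ OmegaSet m := by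
      have e1 : Function.update x p ((x p + t) - t) = x := by
        rw [add_sub_cancel_right, Function.update_eq_self]
      have m1 : ∀ᶠ s in nhds (x p + t), Function.update x p (s - t) ∈ OmegaSet m := by
        have := hc1.preimage_mem_nhds (by rw [e1]; exact hOpen.mem_nhds hx)
        filter_upwards [this] with s hs using hs
      have hc2 : ContinuousAt
          (fun s : ℝ => (fun i => (Function.update x p (s - t)) i + t)) (x p + t) := by
        have : (fun s : ℝ => (fun i => (Function.update x p (s - t)) i + t))
            = (fun z : Fin m → ℝ => (fun i => z i + t)) ∘ (fun s => Function.update x p (s - t)) := rfl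
        rw [this]
        exact (Continuous.continuousAt (by continuity)).comp hc1
      have m2 : ∀ᶠ s in nhds (x p + t),
          (fun i => (Function.update x p (s - t)) i + t) ∈ OmegaSet m := by
        have e2 : (fun i => (Function.update x p ((x p + t) - t)) i + t)
            = fun i => x i + t := by rw [e1]
        have := hc2.preimage_mem_nhds (by rw [e2]; exact hOpen.mem_nhds hxt)
        filter_upwards [this] with s hs using hs
      filter_upwards [m1, m2] with s h1 h2 using ⟨h1, h2⟩
    filter_upwards [hmem] with s hs
    rw [key s]
    exact hti _ t hs.1 hs.2
  show deriv (fun s => g (Function.update (fun i => x i + t) p s)) ((fun i => x i + t) p)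
      = deriv (fun s => g (Function.update x p s)) (x p)
  have : deriv (fun s => g (Function.update (fun i => x i + t) p s)) (x p + t)
      = deriv (fun s => g (Function.update x p (s - t))) (x p + t) := hev.deriv_eq
  rw [show (fun i => x i + t) p = x p + t from rfl, this]
  rw [deriv_comp_sub_const (fun s => g (Function.update x p s)) t (x p + t),
    add_sub_cancel_right]

end TI

section GTrans

lemma G_trans (c : ℂ) (G : (k : ℕ) → (Fin k → ℝ) → ℂ)
    (hGsmooth : ∀ k, ContDiffOn ℝ (⊤ : ℕ∞) (G k) (OmegaSet k))
    (hG1 : ∀ x, G 1 x = 0)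
    (hGward : ∀ (k : ℕ) (x : Fin (k + 1) → ℝ) (y : ℝ), Fin.snoc x y ∈ OmegaSet (k + 2) →
      G (k + 2) (Fin.snoc x y) =
        (∑ i : Fin (k + 1),
          ((((1 / (y - x i) - 1 / y : ℝ)) : ℂ) * pderivC i (G (k + 1)) x
            + (((2 / (y - x i) ^ 2 : ℝ)) : ℂ) * G (k + 1) x))
        + ∑ j : Fin (k + 1),
            c / 2 * (1 / (((y - x j : ℝ)) : ℂ) ^ 4) * G k (x ∘ j.succAbove)) :
    ∀ (m : ℕ) (x : Fin m → ℝ) (t : ℝ), x ∈ OmegaSet m →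
      (fun i => x i + t) ∈ OmegaSet m → G m (fun i => x i + t) = G m x := by
  intro m
  induction m using Nat.strong_induction_on with
  | _ m IH =>
    match m with
    | 0 =>
      intro x t _ _
      congr 1
      funext i
      exact i.elim0
    | 1 =>
      intro x t _ _
      rw [hG1, hG1]
    | (j + 2) =>
      intro x t hx hxt
      have tiJ1 : ∀ (z : Fin (j+1) → ℝ) (s : ℝ), z ∈ OmegaSet (j+1) →
          (fun i => z i + s) ∈ OmegaSet (j+1) → G (j+1) (fun i => z i + s) = G (j+1) z :=
        fun z s => IH (j+1) (by omega) z s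
      have tiJ : ∀ (z : Fin j → ℝ) (s : ℝ), z ∈ OmegaSet j →
          (fun i => z i + s) ∈ OmegaSet j → G j (fun i => z i + s) = G j z :=
        fun z s => IH j (by omega) z s
      set x' : Fin (j+1) → ℝ := Fin.init x with hx'def
      set y : ℝ := x (Fin.last (j+1)) with hydef
      have hxsnoc : Fin.snoc x' y = x := Fin.snoc_init_self x
      have hxtsnoc : Fin.snoc (fun i => x' i + t) (y + t) = (fun i => x i + t) := by
        funext i
        refine Fin.lastCases ?_ (fun q => ?_) i
        · rw [Fin.snoc_last]
        · rw [Fin.snoc_castSucc]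
          show x' q + t = x q.castSucc + t
          rfl
      have hx' : x' ∈ OmegaSet (j+1) :=
        comp_inj_mem_omega hx (Fin.castSucc_injective (j+1))
      have hx't : (fun i => x' i + t) ∈ OmegaSet (j+1) :=
        comp_inj_mem_omega hxt (Fin.castSucc_injective (j+1))
      have hW1 := hGward j x' y (by rw [hxsnoc]; exact hx)
      have hW2 := hGward j (fun i => x' i + t) (y + t) (by rw [hxtsnoc]; exact hxt)
      rw [← hxtsnoc, ← hxsnoc, hW1, hW2]
      -- simplify the shifted arguments
      have harg : ∀ i : Fin (j+1), y + t - ((fun q => x' q + t) i) = y - x' i := by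
        intro i; show y + t - (x' i + t) = y - x' i; ring
      have hpTI : ∀ i : Fin (j+1),
          pderivC i (G (j+1)) (fun q => x' q + t) = pderivC i (G (j+1)) x' :=
        fun i => pderiv_TI tiJ1 hx' hx't i
      have hGj1 : G (j+1) (fun q => x' q + t) = G (j+1) x' := tiJ1 x' t hx' hx't
      have hGj : ∀ l : Fin (j+1),
          G j ((fun q => x' q + t) ∘ l.succAbove) = G j (x' ∘ l.succAbove) := by
        intro l
        have h1 : x' ∘ l.succAbove ∈ OmegaSet j :=
          comp_inj_mem_omega hx' (Fin.succAbove_right_injective)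
        have h2 : (fun p => (x' ∘ l.succAbove) p + t) ∈ OmegaSet j :=
          comp_inj_mem_omega hx't (Fin.succAbove_right_injective)
        exact tiJ (x' ∘ l.succAbove) t h1 h2
      simp only [harg, hpTI, hGj1, hGj]
      have hsum0 : ∑ i : Fin (j+1), pderivC i (G (j+1)) x' = 0 :=
        sum_pderiv_zero (hGsmooth (j+1)) tiJ1 hx'
      congr 1
      -- remaining: the first sums agree thanks to hsum0
      have split : ∀ i : Fin (j+1),
          (((1 / (y - x' i) - 1 / (y + t) : ℝ)) : ℂ) * pderivC i (G (j+1)) x'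
            + (((2 / (y - x' i) ^ 2 : ℝ)) : ℂ) * G (j+1) x'
          = ((((1 / (y - x' i) - 1 / y : ℝ)) : ℂ) * pderivC i (G (j+1)) x'
            + (((2 / (y - x' i) ^ 2 : ℝ)) : ℂ) * G (j+1) x')
            + (((1 / y - 1 / (y + t) : ℝ)) : ℂ) * pderivC i (G (j+1)) x' := by
        intro i; push_cast; ring
      rw [Finset.sum_congr rfl (fun i (_ : i ∈ Finset.univ) => split i),
        Finset.sum_add_distrib, ← Finset.mul_sum, hsum0, mul_zero, add_zero]

end GTrans

section Rec
variable (Gf W Wc : (k : ℕ) → (Fin k → ℝ) → ℂ)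

/-- Normalized form of the connected-correlation recursion. -/
lemma rec_normalize
    (hrec : ∀ (k : ℕ) (x : Fin k → ℝ),
      Wc k x = W k x - ∑ A ∈ (Finset.univ : Finset (Fin k)).powerset.filter (· ≠ ∅),
        Gf A.card (fun i => x ((A.orderIsoOfFin rfl i : Fin k)))
          * Wc (k - A.card)
              (fun i => x (((Aᶜ).orderIsoOfFin
                (by rw [Finset.card_compl, Fintype.card_fin]) i : Fin k)))) :
    ∀ (k : ℕ) (x : Fin k → ℝ),
      Wc k x = W k x - ∑ A ∈ (Finset.univ : Finset (Fin k)).powerset.filter (· ≠ ∅),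
        Gf A.card (x ∘ embF A) * Wc Aᶜ.card (x ∘ embF Aᶜ) := by
  intro k x
  rw [hrec k x]
  congr 1
  refine Finset.sum_congr rfl fun A _ => ?_
  have pf : (Aᶜ : Finset (Fin k)).card = k - A.card := by
    rw [Finset.card_compl, Fintype.card_fin]
  have hGarg : (fun i => x ((A.orderIsoOfFin rfl i : Fin k))) = x ∘ embF A :=
    funext fun i => by rw [Finset.coe_orderIsoOfFin_apply]; rfl
  have hWarg : (fun i => x (((Aᶜ).orderIsoOfFin pf i : Fin k)))
      = fun i => x ((Aᶜ).orderEmbOfFin pf i) :=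
    funext fun i => by rw [Finset.coe_orderIsoOfFin_apply]
  rw [hGarg, hWarg, family_emb_cast Wc Aᶜ pf x]
  rfl

lemma card_compl_lt {k : ℕ} {A : Finset (Fin k)}
    (hA : A ∈ ((Finset.univ : Finset (Fin k)).powerset.filter (· ≠ ∅))) :
    Aᶜ.card < k := by
  have h1 : A ≠ ∅ := (Finset.mem_filter.mp hA).2
  have h2 : 1 ≤ A.card := Finset.card_pos.mpr (Finset.nonempty_iff_ne_empty.mpr h1)
  have h3 : A.card ≤ Fintype.card (Fin k) := Finset.card_le_univ A
  have h4 : Aᶜ.card = Fintype.card (Fin k) - A.card := by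
    rw [Finset.card_compl]
  rw [Fintype.card_fin] at h3 h4
  omega

lemma Wc_smooth
    (hWs : ∀ k, ContDiffOn ℝ (⊤ : ℕ∞) (W k) (OmegaSet k))
    (hGs : ∀ k, ContDiffOn ℝ (⊤ : ℕ∞) (Gf k) (OmegaSet k))
    (hrec : ∀ (k : ℕ) (x : Fin k → ℝ),
      Wc k x = W k x - ∑ A ∈ (Finset.univ : Finset (Fin k)).powerset.filter (· ≠ ∅),
        Gf A.card (x ∘ embF A) * Wc Aᶜ.card (x ∘ embF Aᶜ)) :
    ∀ k, ContDiffOn ℝ (⊤ : ℕ∞) (Wc k) (OmegaSet k) := by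
  intro k
  induction k using Nat.strong_induction_on with
  | _ k IH =>
    have heq : Wc k = fun x => W k x -
        ∑ A ∈ (Finset.univ : Finset (Fin k)).powerset.filter (· ≠ ∅),
          resF A (Gf A.card) x * resF Aᶜ (Wc Aᶜ.card) x := by
      funext x
      rw [hrec k x]
      rfl
    rw [heq]
    exact (hWs k).sub (ContDiffOn.sum fun A hA =>
      (contDiffOn_resF A (hGs A.card)).mul
        (contDiffOn_resF Aᶜ (IH Aᶜ.card (card_compl_lt hA))))

end Rec

section Comb
variable {n : ℕ}

/-- Pullback of a subset of `Fin n` along `embF s`. -/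
noncomputable def pullS (s : Finset (Fin n)) (B : Finset (Fin n)) : Finset (Fin s.card) :=
  B.preimage (embF s) (Function.Injective.injOn (embF_injective s))

lemma push_pull (s : Finset (Fin n)) (B : Finset (Fin n)) (hB : B ⊆ s) :
    pushS s (pullS s B) = B := by
  ext i
  constructor
  · intro hi
    obtain ⟨q, hq, rfl⟩ := Finset.mem_map.mp hi
    exact Finset.mem_preimage.mp hq
  · intro hi
    obtain ⟨q, rfl⟩ := embF_surj s (hB hi)
    exact Finset.mem_map.mpr ⟨q, Finset.mem_preimage.mpr hi, rfl⟩

lemma pull_push (s : Finset (Fin n)) (B' : Finset (Fin s.card)) :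
    pullS s (pushS s B') = B' := by
  ext q
  rw [pullS, Finset.mem_preimage, mem_pushS]

lemma pushS_ne_empty {s : Finset (Fin n)} {B' : Finset (Fin s.card)} (h : B' ≠ ∅) :
    pushS s B' ≠ ∅ := by
  intro hemp
  unfold pushS at hemp
  exact h (Finset.map_eq_empty.mp hemp)

/-- (K3) Transport of a sum over nonempty subsets of `Fin s.card` to a sum over
nonempty subsets of `s`. -/
lemma sum_push (s : Finset (Fin n)) (f : Finset (Fin s.card) → ℂ) (g : Finset (Fin n) → ℂ)
    (hfg : ∀ B' ∈ (Finset.univ : Finset (Fin s.card)).powerset.filter (· ≠ ∅),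
      f B' = g (pushS s B')) :
    ∑ B' ∈ (Finset.univ : Finset (Fin s.card)).powerset.filter (· ≠ ∅), f B'
      = ∑ B ∈ s.powerset.filter (· ≠ ∅), g B := by
  refine Finset.sum_nbij' (i := pushS s) (j := pullS s) ?_ ?_ ?_ ?_ ?_
  · intro B' hB'
    rw [Finset.mem_filter] at hB' ⊢
    exact ⟨Finset.mem_powerset.mpr (pushS_subset s B'), pushS_ne_empty hB'.2⟩
  · intro B hB
    rw [Finset.mem_filter, Finset.mem_powerset] at hB
    rw [Finset.mem_filter, Finset.mem_powerset]
    constructor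
    · exact fun q _ => Finset.mem_univ q
    · intro hemp
      apply hB.2
      rw [← push_pull s B hB.1, hemp]
      rfl
  · intro B' _
    exact pull_push s B'
  · intro B hB
    rw [Finset.mem_filter, Finset.mem_powerset] at hB
    exact push_pull s B hB.1
  · intro B' hB'
    exact hfg B' hB'

lemma compl_insert_eq {l : Fin n} {B : Finset (Fin n)} :
    (insert l B)ᶜ = ({l}ᶜ : Finset (Fin n)) \ B := by
  ext i
  simp only [Finset.mem_compl, Finset.mem_insert, Finset.mem_sdiff,
    Finset.mem_singleton]
  tauto

/-- (K1) Reindexing pairs (A, i ∈ A) as (l, B ⊆ {l}ᶜ) with A = insert l B. -/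
lemma sum_pairs_erase (f : Fin n → Finset (Fin n) → ℂ) :
    ∑ A ∈ (Finset.univ : Finset (Fin n)).powerset.filter (· ≠ ∅), ∑ i ∈ A, f i A
      = ∑ l : Fin n, ∑ B ∈ ({l}ᶜ : Finset (Fin n)).powerset, f l (insert l B) := by
  rw [← Finset.sum_sigma ((Finset.univ : Finset (Fin n)).powerset.filter (· ≠ ∅))
    (fun A => A) (fun p => f p.2 p.1)]
  rw [← Finset.sum_sigma (Finset.univ : Finset (Fin n))
    (fun l => ({l}ᶜ : Finset (Fin n)).powerset) (fun p => f p.1 (insert p.1 p.2))]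
  refine Finset.sum_nbij' (i := fun p => ⟨p.2, p.1.erase p.2⟩)
    (j := fun q => ⟨insert q.1 q.2, q.1⟩) ?_ ?_ ?_ ?_ ?_
  · rintro ⟨A, i⟩ hp
    rw [Finset.mem_sigma] at hp
    rw [Finset.mem_sigma]
    refine ⟨Finset.mem_univ _, ?_⟩
    rw [Finset.mem_powerset]
    intro j hj
    rw [Finset.mem_compl, Finset.mem_singleton]
    exact (Finset.mem_erase.mp hj).1
  · rintro ⟨l, B⟩ hq
    rw [Finset.mem_sigma] at hq
    rw [Finset.mem_sigma, Finset.mem_filter, Finset.mem_powerset]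
    exact ⟨⟨Finset.subset_univ _, Finset.insert_ne_empty l B⟩, Finset.mem_insert_self l B⟩
  · rintro ⟨A, i⟩ hp
    rw [Finset.mem_sigma] at hp
    have : insert i (A.erase i) = A := Finset.insert_erase hp.2
    simp only [this]
  · rintro ⟨l, B⟩ hq
    rw [Finset.mem_sigma, Finset.mem_powerset] at hq
    have hlB : l ∉ B := fun hl => by
      have := hq.2 hl
      rw [Finset.mem_compl, Finset.mem_singleton] at this
      exact this rfl
    have : (insert l B).erase l = B := Finset.erase_insert hlB
    simp only [this]
  · rintro ⟨A, i⟩ hp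
    rw [Finset.mem_sigma] at hp
    have : insert i (A.erase i) = A := Finset.insert_erase hp.2
    show f i A = f i (insert i (A.erase i))
    rw [this]

/-- (K2) Reindexing pairs (A, ∅ ≠ B ⊆ A) as (B, C ⊆ Bᶜ) with A = B ∪ C. -/
lemma sum_pairs_split (ψ : Finset (Fin n) → Finset (Fin n) → ℂ) :
    ∑ A ∈ (Finset.univ : Finset (Fin n)).powerset.filter (· ≠ ∅),
        ∑ B ∈ A.powerset.filter (· ≠ ∅), ψ B A
      = ∑ B ∈ (Finset.univ : Finset (Fin n)).powerset.filter (· ≠ ∅),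
          ∑ C ∈ (Bᶜ : Finset (Fin n)).powerset, ψ B (B ∪ C) := by
  rw [← Finset.sum_sigma ((Finset.univ : Finset (Fin n)).powerset.filter (· ≠ ∅))
    (fun A => A.powerset.filter (· ≠ ∅)) (fun p => ψ p.2 p.1)]
  rw [← Finset.sum_sigma ((Finset.univ : Finset (Fin n)).powerset.filter (· ≠ ∅))
    (fun B => (Bᶜ : Finset (Fin n)).powerset) (fun p => ψ p.1 (p.1 ∪ p.2))]
  refine Finset.sum_nbij' (i := fun p => ⟨p.2, p.1 \ p.2⟩)
    (j := fun q => ⟨q.1 ∪ q.2, q.1⟩) ?_ ?_ ?_ ?_ ?_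
  · rintro ⟨A, B⟩ hp
    obtain ⟨hp1, hp2⟩ := Finset.mem_sigma.mp hp
    have hBne : B ≠ ∅ := (Finset.mem_filter.mp hp2).2
    rw [Finset.mem_sigma, Finset.mem_filter, Finset.mem_powerset, Finset.mem_powerset]
    refine ⟨⟨Finset.subset_univ _, hBne⟩, ?_⟩
    intro j hj
    rw [Finset.mem_compl]
    exact (Finset.mem_sdiff.mp hj).2
  · rintro ⟨B, C⟩ hq
    obtain ⟨hq1, hq2⟩ := Finset.mem_sigma.mp hq
    have hBne : B ≠ ∅ := (Finset.mem_filter.mp hq1).2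
    rw [Finset.mem_sigma, Finset.mem_filter, Finset.mem_powerset,
      Finset.mem_filter, Finset.mem_powerset]
    refine ⟨⟨Finset.subset_univ _, ?_⟩, Finset.subset_union_left, hBne⟩
    intro hemp
    exact hBne (Finset.union_eq_empty.mp hemp).1
  · rintro ⟨A, B⟩ hp
    obtain ⟨hp1, hp2⟩ := Finset.mem_sigma.mp hp
    have hBA : B ⊆ A := Finset.mem_powerset.mp (Finset.mem_filter.mp hp2).1
    have : B ∪ A \ B = A := Finset.union_sdiff_of_subset hBA
    simp only [this]
  · rintro ⟨B, C⟩ hq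
    obtain ⟨hq1, hq2⟩ := Finset.mem_sigma.mp hq
    have hCB : C ⊆ Bᶜ := Finset.mem_powerset.mp hq2
    have hdisj : Disjoint B C := by
      rw [Finset.disjoint_left]
      intro a haB haC
      have := hCB haC
      rw [Finset.mem_compl] at this
      exact this haB
    have : (B ∪ C) \ B = C := Finset.union_sdiff_cancel_left hdisj
    simp only [this]
  · rintro ⟨A, B⟩ hp
    obtain ⟨hp1, hp2⟩ := Finset.mem_sigma.mp hp
    have hBA : B ⊆ A := Finset.mem_powerset.mp (Finset.mem_filter.mp hp2).1
    show ψ B A = ψ B (B ∪ A \ B)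
    rw [Finset.union_sdiff_of_subset hBA]

end Comb

section Transport
variable {n : ℕ}

/-- Split a powerset sum into the empty-set term and the nonempty part. -/
lemma sum_powerset_split (S : Finset (Fin n)) (f : Finset (Fin n) → ℂ) :
    ∑ B ∈ S.powerset, f B = f ∅ + ∑ B ∈ S.powerset.filter (· ≠ ∅), f B := by
  have h1 := Finset.sum_filter_add_sum_filter_not S.powerset (· ≠ ∅) f
  have h2 : S.powerset.filter (fun B => ¬ B ≠ ∅) = {∅} := by
    ext B
    simp only [Finset.mem_filter, Finset.mem_powerset, Finset.mem_singleton,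
      not_not]
    constructor
    · exact fun hB => hB.2
    · rintro rfl; exact ⟨Finset.empty_subset S, rfl⟩
  rw [h2, Finset.sum_singleton] at h1
  rw [← h1]; ring

/-- The recursion `Wc = W - Σ G·Wc`, transported to an arbitrary subset `S`. -/
lemma rec_on_subset (Gf W Wc : (k : ℕ) → (Fin k → ℝ) → ℂ)
    (hrec : ∀ (k : ℕ) (x : Fin k → ℝ),
      Wc k x = W k x - ∑ A ∈ (Finset.univ : Finset (Fin k)).powerset.filter (· ≠ ∅),
        Gf A.card (x ∘ embF A) * Wc Aᶜ.card (x ∘ embF Aᶜ))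
    (S : Finset (Fin n)) (x : Fin n → ℝ) :
    W S.card (x ∘ embF S) = Wc S.card (x ∘ embF S)
      + ∑ B ∈ S.powerset.filter (· ≠ ∅),
          Gf B.card (x ∘ embF B) * Wc (S \ B).card (x ∘ embF (S \ B)) := by
  have h := hrec S.card (x ∘ embF S)
  rw [sum_push S _
    (fun B => Gf B.card (x ∘ embF B) * Wc (S \ B).card (x ∘ embF (S \ B)))
    (fun B' _ => ?_)] at h
  · rw [h]; ring
  · have e1 : Gf B'.card ((x ∘ embF S) ∘ embF B')
        = Gf (pushS S B').card (x ∘ embF (pushS S B')) := family_comp Gf S B' x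
    have e2 : Wc B'ᶜ.card ((x ∘ embF S) ∘ embF B'ᶜ)
        = Wc (S \ pushS S B').card (x ∘ embF (S \ pushS S B')) := by
      have h3 := family_comp Wc S B'ᶜ x
      rw [pushS_compl] at h3
      exact h3
    rw [e1, e2]

end Transport

section SubsetHyp
variable {n : ℕ}

lemma card_ne_zero_of_ne_empty {A : Finset (Fin n)} (hA : A ≠ ∅) : A.card ≠ 0 := by
  simpa [Finset.card_eq_zero] using hA

lemma pushS_singleton_compl (A : Finset (Fin n)) (l : Fin A.card) :
    pushS A ({l}ᶜ : Finset (Fin A.card)) = A.erase (embF A l) := by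
  rw [pushS_compl]
  have h1 : pushS A {l} = {embF A l} := Finset.map_singleton _ l
  rw [h1, ← Finset.erase_eq]

lemma HcT_subset (c : ℂ) (Hc : (k : ℕ) → (Fin k → ℝ) → ℂ)
    (hHcT : ∀ (j : ℕ) (x : Fin (j + 1) → ℝ), x ∈ OmegaSet (j + 1) →
      Hc (j + 1) x = c / 2 * TT (j + 1) (fun i => ((x i : ℝ) : ℂ)))
    (A : Finset (Fin n)) (hA : A ≠ ∅) {x : Fin n → ℝ} (hx : x ∈ OmegaSet n) :
    Hc A.card (x ∘ embF A) = c / 2 * TT A.card (fun i => ((x (embF A i) : ℝ) : ℂ)) := by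
  obtain ⟨j, hj⟩ : ∃ j, A.card = j + 1 :=
    Nat.exists_eq_succ_of_ne_zero (card_ne_zero_of_ne_empty hA)
  have hy : (x ∘ A.orderEmbOfFin hj) ∈ OmegaSet (j + 1) :=
    comp_inj_mem_omega hx (A.orderEmbOfFin hj).injective
  have h1 := hHcT j (x ∘ A.orderEmbOfFin hj) hy
  exact (family_emb_cast (fun m y => Hc m y) A hj x).symm.trans
    (h1.trans (family_emb_cast
      (fun m (y : Fin m → ℝ) => c / 2 * TT m (fun i => ((y i : ℝ) : ℂ))) A hj x))

lemma Gnull_subset (κ c : ℂ) (G H : (k : ℕ) → (Fin k → ℝ) → ℂ)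
    (hGnull : ∀ (j : ℕ) (x : Fin (j + 1) → ℝ), x ∈ OmegaSet (j + 1) →
      Dop κ (G (j + 1)) x
        = -2 * (H (j + 1) x
            - ∑ l : Fin (j + 1), c / 2 * (((1 / (x l) ^ 4 : ℝ)) : ℂ) * G j (x ∘ l.succAbove))
          + (∑ l : Fin (j + 1), (((4 / (x l) ^ 2 : ℝ)) : ℂ)) * G (j + 1) x)
    (A : Finset (Fin n)) (hA : A ≠ ∅) {x : Fin n → ℝ} (hx : x ∈ OmegaSet n) :
    Dop κ (G A.card) (x ∘ embF A)
      = -2 * (H A.card (x ∘ embF A)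
          - ∑ i ∈ A, c / 2 * (((1 / (x i) ^ 4 : ℝ)) : ℂ)
              * G (A.erase i).card (x ∘ embF (A.erase i)))
        + (∑ i ∈ A, (((4 / (x i) ^ 2 : ℝ)) : ℂ)) * G A.card (x ∘ embF A) := by
  obtain ⟨j, hj⟩ : ∃ j, A.card = j + 1 :=
    Nat.exists_eq_succ_of_ne_zero (card_ne_zero_of_ne_empty hA)
  have hy : (x ∘ A.orderEmbOfFin hj) ∈ OmegaSet (j + 1) :=
    comp_inj_mem_omega hx (A.orderEmbOfFin hj).injective
  have h1 := hGnull j (x ∘ A.orderEmbOfFin hj) hy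
  have h2 : ∀ l : Fin (j + 1), G j ((x ∘ A.orderEmbOfFin hj) ∘ l.succAbove)
      = G ({l}ᶜ : Finset (Fin (j + 1))).card
          ((x ∘ A.orderEmbOfFin hj) ∘ embF ({l}ᶜ : Finset (Fin (j + 1)))) :=
    fun l => family_succAbove G l (x ∘ A.orderEmbOfFin hj)
  simp only [h2] at h1
  -- cast the whole identity down to level `A.card`
  have key : Dop κ (G A.card) (x ∘ embF A)
      = (fun m (y : Fin m → ℝ) =>
          -2 * (H m y - ∑ l : Fin m, c / 2 * (((1 / (y l) ^ 4 : ℝ)) : ℂ)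
              * G ({l}ᶜ : Finset (Fin m)).card (y ∘ embF ({l}ᶜ : Finset (Fin m))))
            + (∑ l : Fin m, (((4 / (y l) ^ 2 : ℝ)) : ℂ)) * G m y) A.card (x ∘ embF A) :=
    (family_emb_cast (fun m (y : Fin m → ℝ) => Dop κ (G m) y) A hj x).symm.trans
      (h1.trans (family_emb_cast
        (fun m (y : Fin m → ℝ) =>
          -2 * (H m y - ∑ l : Fin m, c / 2 * (((1 / (y l) ^ 4 : ℝ)) : ℂ)
              * G ({l}ᶜ : Finset (Fin m)).card (y ∘ embF ({l}ᶜ : Finset (Fin m))))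
            + (∑ l : Fin m, (((4 / (y l) ^ 2 : ℝ)) : ℂ)) * G m y) A hj x))
  rw [key]
  show -2 * (H A.card (x ∘ embF A)
        - ∑ l : Fin A.card, c / 2 * (((1 / ((x ∘ embF A) l) ^ 4 : ℝ)) : ℂ)
            * G ({l}ᶜ : Finset (Fin A.card)).card
                ((x ∘ embF A) ∘ embF ({l}ᶜ : Finset (Fin A.card))))
      + (∑ l : Fin A.card, (((4 / ((x ∘ embF A) l) ^ 2 : ℝ)) : ℂ)) * G A.card (x ∘ embF A)
    = _
  have h3 : ∀ l : Fin A.card,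
      G ({l}ᶜ : Finset (Fin A.card)).card
          ((x ∘ embF A) ∘ embF ({l}ᶜ : Finset (Fin A.card)))
        = G (A.erase (embF A l)).card (x ∘ embF (A.erase (embF A l))) := by
    intro l
    have h4 := family_comp G A ({l}ᶜ : Finset (Fin A.card)) x
    rw [pushS_singleton_compl A l] at h4
    exact h4
  have e1 : ∑ l : Fin A.card, c / 2 * (((1 / ((x ∘ embF A) l) ^ 4 : ℝ)) : ℂ)
        * G ({l}ᶜ : Finset (Fin A.card)).card
            ((x ∘ embF A) ∘ embF ({l}ᶜ : Finset (Fin A.card)))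
      = ∑ i ∈ A, c / 2 * (((1 / (x i) ^ 4 : ℝ)) : ℂ)
          * G (A.erase i).card (x ∘ embF (A.erase i)) := by
    rw [sum_emb A (fun i => c / 2 * (((1 / (x i) ^ 4 : ℝ)) : ℂ)
      * G (A.erase i).card (x ∘ embF (A.erase i)))]
    refine Finset.sum_congr rfl fun l _ => ?_
    rw [h3 l]
    simp only [Function.comp_apply]
  have e2 : ∑ l : Fin A.card, (((4 / ((x ∘ embF A) l) ^ 2 : ℝ)) : ℂ)
      = ∑ i ∈ A, (((4 / (x i) ^ 2 : ℝ)) : ℂ) := by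
    rw [sum_emb A (fun i => (((4 / (x i) ^ 2 : ℝ)) : ℂ))]
    exact Finset.sum_congr rfl fun p _ => by simp only [Function.comp_apply]
  rw [e1, e2]

end SubsetHyp

lemma compl_union_eq {n : ℕ} (B C : Finset (Fin n)) :
    ((B ∪ C)ᶜ : Finset (Fin n)) = Bᶜ \ C := by
  ext i
  simp only [Finset.mem_compl, Finset.mem_union, Finset.mem_sdiff]
  tauto


/-- Null-vector equation for connected correlators: under the Ward identities for `F`
and `G`, the null-vector equations for `F`, the equation (ii) for `𝒟G` in terms of a
family `H` representing `⟨T(0)T(x₁)⋯T(x_j)⟩`, and the identification `H^c_j = (c/2)𝒯_j`,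
the connected correlators `F^c` satisfy
`{𝒟 - Σᵢ 4/xᵢ²} F^c_k(x) = c Σ_{∅≠A⊆{1,…,k}} 𝒯_{|A|}(x_A) F^c_{k-|A|}(x_{Aᶜ})`. -/
theorem stmt16 (κ c h : ℂ) (hc : c ≠ 0)
    (F G Fc H Hc : (k : ℕ) → (Fin k → ℝ) → ℂ)
    (hFsmooth : ∀ k, ContDiffOn ℝ (⊤ : ℕ∞) (F k) (OmegaSet k))
    (hGsmooth : ∀ k, ContDiffOn ℝ (⊤ : ℕ∞) (G k) (OmegaSet k))
    (hFsymm : ∀ (k : ℕ) (σ : Equiv.Perm (Fin k)) (x : Fin k → ℝ), F k (x ∘ σ) = F k x)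
    (hGsymm : ∀ (k : ℕ) (σ : Equiv.Perm (Fin k)) (x : Fin k → ℝ), G k (x ∘ σ) = G k x)
    (hG0 : ∀ x, G 0 x = 1)
    (hG1 : ∀ x, G 1 x = 0)
    (hFward0 : ∀ y : ℝ, y ≠ 0 → F 1 (fun _ => y) = h / (y : ℂ) ^ 2 * F 0 ![])
    (hFward : ∀ (k : ℕ) (x : Fin (k + 1) → ℝ) (y : ℝ), Fin.snoc x y ∈ OmegaSet (k + 2) →
      F (k + 2) (Fin.snoc x y) =
        (∑ i : Fin (k + 1),
          ((((1 / (y - x i) - 1 / y : ℝ)) : ℂ) * pderivC i (F (k + 1)) x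
            + (((2 / (y - x i) ^ 2 : ℝ)) : ℂ) * F (k + 1) x))
        + h / (y : ℂ) ^ 2 * F (k + 1) x
        + ∑ j : Fin (k + 1),
            c / 2 * (1 / (((y - x j : ℝ)) : ℂ) ^ 4) * F k (x ∘ j.succAbove))
    (hGward0 : ∀ y : ℝ, y ≠ 0 → G 1 (fun _ => y) = 0)
    (hGward : ∀ (k : ℕ) (x : Fin (k + 1) → ℝ) (y : ℝ), Fin.snoc x y ∈ OmegaSet (k + 2) →
      G (k + 2) (Fin.snoc x y) =
        (∑ i : Fin (k + 1),
          ((((1 / (y - x i) - 1 / y : ℝ)) : ℂ) * pderivC i (G (k + 1)) x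
            + (((2 / (y - x i) ^ 2 : ℝ)) : ℂ) * G (k + 1) x))
        + ∑ j : Fin (k + 1),
            c / 2 * (1 / (((y - x j : ℝ)) : ℂ) ^ 4) * G k (x ∘ j.succAbove))
    (hFc0 : ∀ x, Fc 0 x = F 0 x)
    (hFcrec : ∀ (k : ℕ) (x : Fin k → ℝ),
      Fc k x = F k x - ∑ A ∈ (Finset.univ : Finset (Fin k)).powerset.filter (· ≠ ∅),
        G A.card (fun i => x ((A.orderIsoOfFin rfl i : Fin k)))
          * Fc (k - A.card)
              (fun i => x (((Aᶜ).orderIsoOfFin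
                (by rw [Finset.card_compl, Fintype.card_fin]) i : Fin k))))
    -- (i) the null-vector equations for the full correlators F
    (hFnull : ∀ (k : ℕ) (x : Fin (k + 1) → ℝ), x ∈ OmegaSet (k + 1) →
      Dop κ (F (k + 1)) x - (∑ i : Fin (k + 1), (((4 / (x i) ^ 2 : ℝ)) : ℂ)) * F (k + 1) x
        = c * ∑ i : Fin (k + 1), (((1 / (x i) ^ 4 : ℝ)) : ℂ) * F k (x ∘ i.succAbove))
    -- (ii) the family H representing ⟨T(0)T(x₁)⋯T(x_j)⟩
    (hHsmooth : ∀ k, ContDiffOn ℝ (⊤ : ℕ∞) (H k) (OmegaSet k))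
    (hHsymm : ∀ (k : ℕ) (σ : Equiv.Perm (Fin k)) (x : Fin k → ℝ), H k (x ∘ σ) = H k x)
    (hGnull : ∀ (j : ℕ) (x : Fin (j + 1) → ℝ), x ∈ OmegaSet (j + 1) →
      Dop κ (G (j + 1)) x
        = -2 * (H (j + 1) x
            - ∑ l : Fin (j + 1), c / 2 * (((1 / (x l) ^ 4 : ℝ)) : ℂ) * G j (x ∘ l.succAbove))
          + (∑ l : Fin (j + 1), (((4 / (x l) ^ 2 : ℝ)) : ℂ)) * G (j + 1) x)
    -- (iii) the connected versions of H are the Brownian-bubble weights (c/2)·𝒯_j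
    (hHc0 : ∀ x, Hc 0 x = 0)
    (hHcrec : ∀ (k : ℕ) (x : Fin k → ℝ),
      Hc k x = H k x - ∑ A ∈ (Finset.univ : Finset (Fin k)).powerset.filter (· ≠ ∅),
        G A.card (fun i => x ((A.orderIsoOfFin rfl i : Fin k)))
          * Hc (k - A.card)
              (fun i => x (((Aᶜ).orderIsoOfFin
                (by rw [Finset.card_compl, Fintype.card_fin]) i : Fin k))))
    (hHcT : ∀ (j : ℕ) (x : Fin (j + 1) → ℝ), x ∈ OmegaSet (j + 1) →
      Hc (j + 1) x = c / 2 * TT (j + 1) (fun i => ((x i : ℝ) : ℂ))) :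
    -- conclusion: null-vector equation for the connected correlators
    ∀ (k : ℕ) (x : Fin (k + 1) → ℝ), x ∈ OmegaSet (k + 1) →
      Dop κ (Fc (k + 1)) x - (∑ i : Fin (k + 1), (((4 / (x i) ^ 2 : ℝ)) : ℂ)) * Fc (k + 1) x
        = c * ∑ A ∈ (Finset.univ : Finset (Fin (k + 1))).powerset.filter (· ≠ ∅),
            TT A.card (fun i => ((x ((A.orderIsoOfFin rfl i : Fin (k + 1))) : ℝ) : ℂ))
              * Fc (k + 1 - A.card)
                  (fun i => x (((Aᶜ).orderIsoOfFin
                    (by rw [Finset.card_compl, Fintype.card_fin]) i : Fin (k + 1)))) := by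
  have hFcrec' := rec_normalize G F Fc hFcrec
  have hHcrec' := rec_normalize G H Hc hHcrec
  have hFcsmooth : ∀ k, ContDiffOn ℝ (⊤ : ℕ∞) (Fc k) (OmegaSet k) :=
    Wc_smooth G F Fc hFsmooth hGsmooth hFcrec'
  have hTI := G_trans c G hGsmooth hG1 hGward
  have main : ∀ (m : ℕ) (x : Fin m → ℝ), x ∈ OmegaSet m →
      Dop κ (Fc m) x = (∑ i : Fin m, (((4 / (x i) ^ 2 : ℝ)) : ℂ)) * Fc m x
        + c * ∑ A ∈ (Finset.univ : Finset (Fin m)).powerset.filter (· ≠ ∅),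
            TT A.card (fun i => ((x (embF A i) : ℝ) : ℂ)) * Fc Aᶜ.card (x ∘ embF Aᶜ) := by
    intro m
    induction m using Nat.strong_induction_on with
    | _ n IH =>
      rcases n with _ | k
      · intro x _
        have h1 : ((Finset.univ : Finset (Fin 0)).powerset.filter (· ≠ ∅))
            = (∅ : Finset (Finset (Fin 0))) :=
          Finset.filter_false_of_mem (fun A _ => by
            simp [Finset.eq_empty_of_isEmpty A])
        rw [h1]
        simp [Dop]
      · intro x hx
        -- E0 : decompose Dop(Fc)
        have heqFc : Fc (k+1) = fun y => F (k+1) y -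
            ∑ A ∈ (Finset.univ : Finset (Fin (k+1))).powerset.filter (· ≠ ∅),
              resF A (G A.card) y * resF Aᶜ (Fc Aᶜ.card) y :=
          funext fun y => by rw [hFcrec' (k+1) y]; rfl
        have hE0 : Dop κ (Fc (k+1)) x = Dop κ (F (k+1)) x -
            ∑ A ∈ (Finset.univ : Finset (Fin (k+1))).powerset.filter (· ≠ ∅),
              Dop κ (fun y => resF A (G A.card) y * resF Aᶜ (Fc Aᶜ.card) y) x := by
          conv_lhs => rw [heqFc]
          exact Dop_sub_sum κ _ _ (hFsmooth (k+1))
            (fun A _ => (contDiffOn_resF A (hGsmooth _)).mul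
              (contDiffOn_resF Aᶜ (hFcsmooth _))) hx
        -- per-A expansion of the product terms
        have hterm : ∀ A ∈ (Finset.univ : Finset (Fin (k+1))).powerset.filter (· ≠ ∅),
            Dop κ (fun y => resF A (G A.card) y * resF Aᶜ (Fc Aᶜ.card) y) x
            = (-2 * (H A.card (x ∘ embF A)
                  - ∑ i ∈ A, c / 2 * (((1 / (x i) ^ 4 : ℝ)) : ℂ)
                      * G (A.erase i).card (x ∘ embF (A.erase i)))
                + (∑ i ∈ A, (((4 / (x i) ^ 2 : ℝ)) : ℂ)) * G A.card (x ∘ embF A))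
                  * Fc Aᶜ.card (x ∘ embF Aᶜ)
              + G A.card (x ∘ embF A) *
                ((∑ i ∈ Aᶜ, (((4 / (x i) ^ 2 : ℝ)) : ℂ)) * Fc Aᶜ.card (x ∘ embF Aᶜ)
                  + c * ∑ C ∈ Aᶜ.powerset.filter (· ≠ ∅),
                      TT C.card (fun i => ((x (embF C i) : ℝ) : ℂ))
                        * Fc (Aᶜ \ C).card (x ∘ embF (Aᶜ \ C))) := by
          intro A hA
          have hAne : A ≠ ∅ := (Finset.mem_filter.mp hA).2
          rw [Dop_res_mul κ A (G A.card) (Fc Aᶜ.card) (hGsmooth _) (hFcsmooth _) hx]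
          have hzero : (∑ p, pderivC p (G A.card) (x ∘ embF A)) = 0 :=
            sum_pderiv_zero (hGsmooth _) (hTI A.card) (comp_embF_mem_omega hx A)
          rw [hzero, mul_zero, zero_mul, add_zero]
          rw [Gnull_subset κ c G H hGnull A hAne hx]
          have hlt : Aᶜ.card < k + 1 := card_compl_lt hA
          have h1 := IH Aᶜ.card hlt (x ∘ embF Aᶜ) (comp_embF_mem_omega hx Aᶜ)
          have h2 : Dop κ (Fc Aᶜ.card) (x ∘ embF Aᶜ)
              = (∑ i ∈ Aᶜ, (((4 / (x i) ^ 2 : ℝ)) : ℂ)) * Fc Aᶜ.card (x ∘ embF Aᶜ)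
                + c * ∑ C ∈ Aᶜ.powerset.filter (· ≠ ∅),
                    TT C.card (fun i => ((x (embF C i) : ℝ) : ℂ))
                      * Fc (Aᶜ \ C).card (x ∘ embF (Aᶜ \ C)) := by
            rw [h1]
            congr 1
            · congr 1
              rw [sum_emb Aᶜ (fun i => (((4 / (x i) ^ 2 : ℝ)) : ℂ))]
              exact Finset.sum_congr rfl fun p _ => by simp only [Function.comp_apply]
            · congr 1
              refine sum_push Aᶜ _ _ (fun C' hC' => ?_)
              have t1 : TT C'.card (fun i => (((x ∘ embF Aᶜ) (embF C' i) : ℝ) : ℂ))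
                  = TT (pushS Aᶜ C').card
                      (fun i => ((x (embF (pushS Aᶜ C') i) : ℝ) : ℂ)) :=
                family_comp TT Aᶜ C' (fun i => ((x i : ℝ) : ℂ))
              have t2 : Fc (C'ᶜ).card ((x ∘ embF Aᶜ) ∘ embF C'ᶜ)
                  = Fc (Aᶜ \ pushS Aᶜ C').card (x ∘ embF (Aᶜ \ pushS Aᶜ C')) := by
                have h4 := family_comp Fc Aᶜ C'ᶜ x
                rw [pushS_compl] at h4
                exact h4
              rw [t1, t2]
          rw [h2]
        -- E1 : F-null with subset form
        have hE1 : Dop κ (F (k+1)) x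
            = (∑ i : Fin (k+1), (((4 / (x i) ^ 2 : ℝ)) : ℂ)) * F (k+1) x
              + c * ∑ l : Fin (k+1), (((1 / (x l) ^ 4 : ℝ)) : ℂ)
                  * F ({l}ᶜ : Finset (Fin (k+1))).card
                      (x ∘ embF ({l}ᶜ : Finset (Fin (k+1)))) := by
          have h0 := hFnull k x hx
          have h1 : ∀ i : Fin (k+1), F k (x ∘ i.succAbove)
              = F ({i}ᶜ : Finset (Fin (k+1))).card
                  (x ∘ embF ({i}ᶜ : Finset (Fin (k+1)))) :=
            fun i => family_succAbove F i x
          simp only [h1] at h0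
          linear_combination h0
        -- top-level recursion
        have hFtop : F (k+1) x = Fc (k+1) x
            + ∑ A ∈ (Finset.univ : Finset (Fin (k+1))).powerset.filter (· ≠ ∅),
                G A.card (x ∘ embF A) * Fc Aᶜ.card (x ∘ embF Aᶜ) := by
          have h0 := hFcrec' (k+1) x
          rw [h0]; ring
        -- E5 : full powerset sum for F on {l}ᶜ
        have hFl : ∀ l : Fin (k+1),
            ∑ B ∈ ({l}ᶜ : Finset (Fin (k+1))).powerset,
              G B.card (x ∘ embF B)
                * Fc (({l}ᶜ : Finset (Fin (k+1))) \ B).card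
                    (x ∘ embF (({l}ᶜ : Finset (Fin (k+1))) \ B))
            = F ({l}ᶜ : Finset (Fin (k+1))).card
                (x ∘ embF ({l}ᶜ : Finset (Fin (k+1)))) := by
          intro l
          rw [sum_powerset_split, rec_on_subset G F Fc hFcrec' ({l}ᶜ) x]
          have hg0 : G (∅ : Finset (Fin (k+1))).card
              (x ∘ embF (∅ : Finset (Fin (k+1)))) = 1 := hG0 _
          rw [Finset.sdiff_empty, hg0, one_mul]
        -- split the big sum of products
        have hsum : ∑ A ∈ (Finset.univ : Finset (Fin (k+1))).powerset.filter (· ≠ ∅),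
              Dop κ (fun y => resF A (G A.card) y * resF Aᶜ (Fc Aᶜ.card) y) x
            = -2 * ∑ A ∈ (Finset.univ : Finset (Fin (k+1))).powerset.filter (· ≠ ∅),
                  H A.card (x ∘ embF A) * Fc Aᶜ.card (x ∘ embF Aᶜ)
              + 2 * ∑ A ∈ (Finset.univ : Finset (Fin (k+1))).powerset.filter (· ≠ ∅),
                  (∑ i ∈ A, c / 2 * (((1 / (x i) ^ 4 : ℝ)) : ℂ)
                      * G (A.erase i).card (x ∘ embF (A.erase i)))
                    * Fc Aᶜ.card (x ∘ embF Aᶜ)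
              + (∑ i : Fin (k+1), (((4 / (x i) ^ 2 : ℝ)) : ℂ))
                  * ∑ A ∈ (Finset.univ : Finset (Fin (k+1))).powerset.filter (· ≠ ∅),
                      G A.card (x ∘ embF A) * Fc Aᶜ.card (x ∘ embF Aᶜ)
              + c * ∑ A ∈ (Finset.univ : Finset (Fin (k+1))).powerset.filter (· ≠ ∅),
                  G A.card (x ∘ embF A)
                    * ∑ C ∈ Aᶜ.powerset.filter (· ≠ ∅),
                        TT C.card (fun i => ((x (embF C i) : ℝ) : ℂ))
                          * Fc (Aᶜ \ C).card (x ∘ embF (Aᶜ \ C)) := by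
          rw [Finset.sum_congr rfl hterm]
          have hstep : ∀ A ∈ (Finset.univ : Finset (Fin (k+1))).powerset.filter (· ≠ ∅),
              (-2 * (H A.card (x ∘ embF A)
                  - ∑ i ∈ A, c / 2 * (((1 / (x i) ^ 4 : ℝ)) : ℂ)
                      * G (A.erase i).card (x ∘ embF (A.erase i)))
                + (∑ i ∈ A, (((4 / (x i) ^ 2 : ℝ)) : ℂ)) * G A.card (x ∘ embF A))
                  * Fc Aᶜ.card (x ∘ embF Aᶜ)
              + G A.card (x ∘ embF A) *
                ((∑ i ∈ Aᶜ, (((4 / (x i) ^ 2 : ℝ)) : ℂ)) * Fc Aᶜ.card (x ∘ embF Aᶜ)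
                  + c * ∑ C ∈ Aᶜ.powerset.filter (· ≠ ∅),
                      TT C.card (fun i => ((x (embF C i) : ℝ) : ℂ))
                        * Fc (Aᶜ \ C).card (x ∘ embF (Aᶜ \ C)))
              = -2 * (H A.card (x ∘ embF A) * Fc Aᶜ.card (x ∘ embF Aᶜ))
              + 2 * ((∑ i ∈ A, c / 2 * (((1 / (x i) ^ 4 : ℝ)) : ℂ)
                    * G (A.erase i).card (x ∘ embF (A.erase i)))
                  * Fc Aᶜ.card (x ∘ embF Aᶜ))
              + (∑ i : Fin (k+1), (((4 / (x i) ^ 2 : ℝ)) : ℂ))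
                  * (G A.card (x ∘ embF A) * Fc Aᶜ.card (x ∘ embF Aᶜ))
              + c * (G A.card (x ∘ embF A)
                  * ∑ C ∈ Aᶜ.powerset.filter (· ≠ ∅),
                      TT C.card (fun i => ((x (embF C i) : ℝ) : ℂ))
                        * Fc (Aᶜ \ C).card (x ∘ embF (Aᶜ \ C))) := by
            intro A _
            have h4 := Finset.sum_add_sum_compl A (fun i => (((4 / (x i) ^ 2 : ℝ)) : ℂ))
            linear_combination (G A.card (x ∘ embF A) * Fc Aᶜ.card (x ∘ embF Aᶜ)) * h4
          rw [Finset.sum_congr rfl hstep]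
          simp only [Finset.sum_add_distrib]
          rw [← Finset.mul_sum, ← Finset.mul_sum, ← Finset.mul_sum, ← Finset.mul_sum]
        -- R1 : erase/insert reindexing
        have hR1 : ∑ A ∈ (Finset.univ : Finset (Fin (k+1))).powerset.filter (· ≠ ∅),
              (∑ i ∈ A, c / 2 * (((1 / (x i) ^ 4 : ℝ)) : ℂ)
                  * G (A.erase i).card (x ∘ embF (A.erase i)))
                * Fc Aᶜ.card (x ∘ embF Aᶜ)
            = c / 2 * ∑ l : Fin (k+1), (((1 / (x l) ^ 4 : ℝ)) : ℂ)
                * F ({l}ᶜ : Finset (Fin (k+1))).card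
                    (x ∘ embF ({l}ᶜ : Finset (Fin (k+1)))) := by
          have step1 : ∀ A ∈ (Finset.univ : Finset (Fin (k+1))).powerset.filter (· ≠ ∅),
              (∑ i ∈ A, c / 2 * (((1 / (x i) ^ 4 : ℝ)) : ℂ)
                  * G (A.erase i).card (x ∘ embF (A.erase i)))
                * Fc Aᶜ.card (x ∘ embF Aᶜ)
              = ∑ i ∈ A, c / 2 * (((1 / (x i) ^ 4 : ℝ)) : ℂ)
                  * G (A.erase i).card (x ∘ embF (A.erase i))
                  * Fc Aᶜ.card (x ∘ embF Aᶜ) :=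
            fun A _ => Finset.sum_mul _ _ _
          rw [Finset.sum_congr rfl step1]
          rw [sum_pairs_erase (fun i A => c / 2 * (((1 / (x i) ^ 4 : ℝ)) : ℂ)
              * G (A.erase i).card (x ∘ embF (A.erase i))
              * Fc Aᶜ.card (x ∘ embF Aᶜ))]
          rw [Finset.mul_sum]
          refine Finset.sum_congr rfl fun l _ => ?_
          have step2 : ∀ B ∈ ({l}ᶜ : Finset (Fin (k+1))).powerset,
              c / 2 * (((1 / (x l) ^ 4 : ℝ)) : ℂ)
                * G ((insert l B).erase l).card (x ∘ embF ((insert l B).erase l))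
                * Fc ((insert l B)ᶜ).card (x ∘ embF ((insert l B)ᶜ))
              = c / 2 * (((1 / (x l) ^ 4 : ℝ)) : ℂ)
                * (G B.card (x ∘ embF B)
                    * Fc (({l}ᶜ : Finset (Fin (k+1))) \ B).card
                        (x ∘ embF (({l}ᶜ : Finset (Fin (k+1))) \ B))) := by
            intro B hB
            have hlB : l ∉ B := fun hl => by
              have h5 := Finset.mem_powerset.mp hB hl
              rw [Finset.mem_compl, Finset.mem_singleton] at h5
              exact h5 rfl
            rw [Finset.erase_insert hlB, compl_insert_eq]
            ring
          rw [Finset.sum_congr rfl step2, ← Finset.mul_sum, hFl l]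
          ring
        -- R2 : H-expansion and split reindexing
        have hR2 : ∑ A ∈ (Finset.univ : Finset (Fin (k+1))).powerset.filter (· ≠ ∅),
              H A.card (x ∘ embF A) * Fc Aᶜ.card (x ∘ embF Aᶜ)
            = c / 2 * ∑ A ∈ (Finset.univ : Finset (Fin (k+1))).powerset.filter (· ≠ ∅),
                  TT A.card (fun i => ((x (embF A i) : ℝ) : ℂ))
                    * Fc Aᶜ.card (x ∘ embF Aᶜ)
              + c / 2 * ∑ A ∈ (Finset.univ : Finset (Fin (k+1))).powerset.filter (· ≠ ∅),
                  G A.card (x ∘ embF A)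
                    * ∑ C ∈ Aᶜ.powerset.filter (· ≠ ∅),
                        TT C.card (fun i => ((x (embF C i) : ℝ) : ℂ))
                          * Fc (Aᶜ \ C).card (x ∘ embF (Aᶜ \ C)) := by
          have step1 : ∀ A ∈ (Finset.univ : Finset (Fin (k+1))).powerset.filter (· ≠ ∅),
              H A.card (x ∘ embF A) * Fc Aᶜ.card (x ∘ embF Aᶜ)
              = c / 2 * (TT A.card (fun i => ((x (embF A i) : ℝ) : ℂ))
                    * Fc Aᶜ.card (x ∘ embF Aᶜ))
                + ∑ B ∈ A.powerset.filter (· ≠ ∅),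
                    G B.card (x ∘ embF B) * Hc (A \ B).card (x ∘ embF (A \ B))
                      * Fc Aᶜ.card (x ∘ embF Aᶜ) := by
            intro A hA
            have hAne : A ≠ ∅ := (Finset.mem_filter.mp hA).2
            rw [rec_on_subset G H Hc hHcrec' A x,
              HcT_subset c Hc hHcT A hAne hx, add_mul, Finset.sum_mul, mul_assoc]
          rw [Finset.sum_congr rfl step1, Finset.sum_add_distrib, ← Finset.mul_sum]
          congr 1
          rw [sum_pairs_split (fun B A => G B.card (x ∘ embF B)
              * Hc (A \ B).card (x ∘ embF (A \ B)) * Fc Aᶜ.card (x ∘ embF Aᶜ))]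
          rw [Finset.mul_sum]
          refine Finset.sum_congr rfl fun B hB => ?_
          have step2 : ∀ C ∈ (Bᶜ : Finset (Fin (k+1))).powerset,
              G B.card (x ∘ embF B)
                * Hc ((B ∪ C) \ B).card (x ∘ embF ((B ∪ C) \ B))
                * Fc ((B ∪ C)ᶜ).card (x ∘ embF ((B ∪ C)ᶜ))
              = G B.card (x ∘ embF B) * Hc C.card (x ∘ embF C)
                * Fc ((Bᶜ : Finset (Fin (k+1))) \ C).card
                    (x ∘ embF ((Bᶜ : Finset (Fin (k+1))) \ C)) := by
            intro C hC
            have hCB : C ⊆ Bᶜ := Finset.mem_powerset.mp hC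
            have hdisj : Disjoint B C := by
              rw [Finset.disjoint_left]
              intro a haB haC
              have h5 := hCB haC
              rw [Finset.mem_compl] at h5
              exact h5 haB
            rw [Finset.union_sdiff_cancel_left hdisj, compl_union_eq]
          rw [Finset.sum_congr rfl step2, sum_powerset_split]
          have hzero : Hc (∅ : Finset (Fin (k+1))).card
              (x ∘ embF (∅ : Finset (Fin (k+1)))) = 0 := hHc0 _
          rw [hzero, mul_zero, zero_mul, zero_add]
          have step3 : ∀ C ∈ (Bᶜ : Finset (Fin (k+1))).powerset.filter (· ≠ ∅),
              G B.card (x ∘ embF B) * Hc C.card (x ∘ embF C)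
                * Fc ((Bᶜ : Finset (Fin (k+1))) \ C).card
                    (x ∘ embF ((Bᶜ : Finset (Fin (k+1))) \ C))
              = c / 2 * (G B.card (x ∘ embF B)
                  * (TT C.card (fun i => ((x (embF C i) : ℝ) : ℂ))
                      * Fc ((Bᶜ : Finset (Fin (k+1))) \ C).card
                          (x ∘ embF ((Bᶜ : Finset (Fin (k+1))) \ C)))) := by
            intro C hC
            rw [HcT_subset c Hc hHcT C (Finset.mem_filter.mp hC).2 hx]
            ring
          rw [Finset.sum_congr rfl step3, ← Finset.mul_sum, ← Finset.mul_sum]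
        -- final assembly
        rw [hE0, hsum, hE1, hFtop, hR1, hR2]
        ring
  intro k x hx
  have hmain := main (k+1) x hx
  have hconv : ∑ A ∈ (Finset.univ : Finset (Fin (k + 1))).powerset.filter (· ≠ ∅),
      TT A.card (fun i => ((x ((A.orderIsoOfFin rfl i : Fin (k + 1))) : ℝ) : ℂ))
        * Fc (k + 1 - A.card)
            (fun i => x (((Aᶜ).orderIsoOfFin
              (by rw [Finset.card_compl, Fintype.card_fin]) i : Fin (k + 1))))
      = ∑ A ∈ (Finset.univ : Finset (Fin (k + 1))).powerset.filter (· ≠ ∅),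
          TT A.card (fun i => ((x (embF A i) : ℝ) : ℂ)) * Fc Aᶜ.card (x ∘ embF Aᶜ) := by
    refine Finset.sum_congr rfl fun A _ => ?_
    have pf : (Aᶜ : Finset (Fin (k + 1))).card = k + 1 - A.card := by
      rw [Finset.card_compl, Fintype.card_fin]
    have h1 : (fun i => ((x ((A.orderIsoOfFin rfl i : Fin (k + 1))) : ℝ) : ℂ))
        = fun i => ((x (embF A i) : ℝ) : ℂ) :=
      funext fun i => by rw [Finset.coe_orderIsoOfFin_apply]; rfl
    have h2 : (fun i => x (((Aᶜ).orderIsoOfFin pf i : Fin (k + 1))))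
        = fun i => x ((Aᶜ).orderEmbOfFin pf i) :=
      funext fun i => by rw [Finset.coe_orderIsoOfFin_apply]
    rw [h1, h2, family_emb_cast Fc Aᶜ pf x]
    rfl
  rw [hconv, hmain]
  ring
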